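/- arXiv:2601.12655 — 7 statements merged into one kernel-verified Lean document; each statement's English description precedes it below -/
import Mathlib

section
/- In the N-class model, for every premium pair c in C² (where C is the set of nondecreasing maps {1,…,N} → [μ, M]), the Bellman operator L_c has a unique fixed point V*_c : X → ℝ, and the maps c ↦ V*_c(n,i) and c ↦ max(0, W↑(n,i;V*_c) − W↓(n,i;V*_c)) are continuous functions of c ∈ C² ⊆ ℝ^{2N}, for every state (n,i) ∈ X. -/
noncomputable section

open MeasureTheory Set

/-- Cumulative distribution function of the loss: point mass `p₀` at zero plus density `fL`. -/
def lossCdf (p₀ : ℝ) (fL : ℝ → ℝ) (x : ℝ) : ℝ := p₀ + ∫ ℓ in (0:ℝ)..x, fL ℓ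

/-- Rate class after a bonus: `n↓ = max(n−1,1)` (classes are 0-indexed by `Fin N`). -/
def rdown {N : ℕ} (n : Fin N) : Fin N :=
  ⟨n.val - 1, lt_of_le_of_lt (Nat.sub_le _ _) n.isLt⟩

/-- Rate class after a malus: `n↑ = min(n+1,N)` (classes are 0-indexed by `Fin N`). -/
def rup {N : ℕ} (n : Fin N) : Fin N :=
  if h : n.val + 1 < N then ⟨n.val + 1, h⟩ else n

/-- Company-switching probability `σ(n,i)`; company `0` is Company 1, company `1` is
Company 2, and `c i` is the premium schedule of company `i`. -/
def swProb {N : ℕ} (η : ℝ → ℝ) (c : Fin 2 → Fin N → ℝ) (n : Fin N) (i : Fin 2) : ℝ :=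
  if i = 0 then 1 - η (c 1 (rdown n) - c 0 (rdown n))
  else η (c 1 (rdown n) - c 0 (rdown n))

/-- Continuation value after a bonus: `W↓(n,i;v)`. (`i + 1` in `Fin 2` is the other company.) -/
def Wdown {N : ℕ} (η : ℝ → ℝ) (c : Fin 2 → Fin N → ℝ) (v : Fin N × Fin 2 → ℝ)
    (n : Fin N) (i : Fin 2) : ℝ :=
  (1 - swProb η c n i) * v (rdown n, i) + swProb η c n i * v (rdown n, i + 1)

/-- Continuation value after a malus: `W↑(n,i;v)`. -/
def Wup {N : ℕ} (η : ℝ → ℝ) (c : Fin 2 → Fin N → ℝ) (v : Fin N × Fin 2 → ℝ)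
    (n : Fin N) (i : Fin 2) : ℝ :=
  (1 - swProb η c n i) * v (rup n, i) + swProb η c n i * v (rup n, i + 1)

/-- One-step Bellman objective in the reporting barrier `b`. -/
def bellObj {N : ℕ} (p₀ δ : ℝ) (fL η : ℝ → ℝ) (c : Fin 2 → Fin N → ℝ)
    (v : Fin N × Fin 2 → ℝ) (x : Fin N × Fin 2) (b : ℝ) : ℝ :=
  δ * (c x.2 x.1 + (∫ ℓ in (0:ℝ)..b, ℓ * fL ℓ)
    + lossCdf p₀ fL b * Wdown η c v x.1 x.2
    + (1 - lossCdf p₀ fL b) * Wup η c v x.1 x.2)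

/-- The Bellman operator `L_c`. -/
def bellOp {N : ℕ} (p₀ δ : ℝ) (fL η : ℝ → ℝ) (c : Fin 2 → Fin N → ℝ)
    (v : Fin N × Fin 2 → ℝ) (x : Fin N × Fin 2) : ℝ :=
  ⨅ b : {b : ℝ // 0 ≤ b}, bellObj p₀ δ fL η c v x b.1

/-- The set of admissible premium pairs. -/
def premSet (N : ℕ) (μ M : ℝ) : Set (Fin 2 → Fin N → ℝ) :=
  {c | ∀ i : Fin 2, Monotone (c i) ∧ ∀ n : Fin N, c i n ∈ Set.Icc μ M}


/-!
For fixed premiums `c`, each objective `bellObj c v x b` is `δ` times the premium plus a convex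
combination (with weight `lossCdf b ∈ [0,1]`) of the continuation values `W↓`, `W↑`, which are
themselves convex combinations of values of `v`. Hence, uniformly in the barrier `b`, changing
`v` moves the objective by at most `δ ‖v - w‖∞`, and changing `c` by at most
`δ (|Δc| + max |ΔW↓| |ΔW↑|)`; both bounds pass to the infimum. So `L_c` is a `δ`-contraction
with unique fixed point `V*_c`, and `c ↦ L_c v` is continuous for every `v`. For a family of
contractions with a common constant, the a posteriori estimate
`dist u (V*_c) ≤ dist u (L_c u) / (1 - δ)` at `u = V*_{c₀}` shows that `c ↦ V*_c` is continuous,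
and the barrier `max 0 (W↑ - W↓)` is a continuous expression in `c` and `V*_c`.
-/

open Filter Topology

lemma abs_add_mul_le_max {s t a b : ℝ} (hs : 0 ≤ s) (ht : 0 ≤ t) (hst : s + t = 1) :
    |s * a + t * b| ≤ max |a| |b| :=
  calc |s * a + t * b| ≤ s * |a| + t * |b| := by
        simpa only [abs_mul, abs_of_nonneg hs, abs_of_nonneg ht] using abs_add_le (s * a) (t * b)
    _ ≤ s * max |a| |b| + t * max |a| |b| := by gcongr <;> simp
    _ = max |a| |b| := by rw [← add_mul, hst, one_mul]

lemma ciInf_le_ciInf_add {ι : Type*} [Nonempty ι] {f g : ι → ℝ} {C : ℝ}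
    (hf : BddBelow (Set.range f)) (h : ∀ i, f i ≤ g i + C) : ⨅ i, f i ≤ (⨅ i, g i) + C :=
  sub_le_iff_le_add.1 <| le_ciInf fun i => sub_le_iff_le_add.2 <| (ciInf_le hf i).trans (h i)

lemma abs_ciInf_sub_ciInf_le {ι : Type*} [Nonempty ι] {f g : ι → ℝ} {C : ℝ}
    (hf : BddBelow (Set.range f)) (hg : BddBelow (Set.range g)) (h : ∀ i, |f i - g i| ≤ C) :
    |(⨅ i, f i) - ⨅ i, g i| ≤ C := by
  rw [abs_sub_le_iff]
  constructor
  · refine sub_le_iff_le_add'.2 <| ciInf_le_ciInf_add hf fun i => ?_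
    linarith [(abs_sub_le_iff.1 (h i)).1]
  · refine sub_le_iff_le_add'.2 <| ciInf_le_ciInf_add hg fun i => ?_
    linarith [(abs_sub_le_iff.1 (h i)).2]

theorem ContractingWith.continuous_fixedPoint {α E : Type*} [TopologicalSpace α] [MetricSpace E]
    [Nonempty E] [CompleteSpace E] {K : NNReal} {f : α → E → E}
    (hf : ∀ a, ContractingWith K (f a)) (hcont : ∀ u, Continuous fun a => f a u) :
    Continuous fun a => fixedPoint (f a) (hf a) := by
  refine continuous_iff_continuousAt.2 fun a₀ => tendsto_iff_dist_tendsto_zero.2 ?_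
  set u := fixedPoint (f a₀) (hf a₀)
  have hmove : Tendsto (fun a => dist u (f a u) / (1 - K)) (𝓝 a₀) (𝓝 0) := by
    have := (((continuous_const (y := u)).dist (hcont u)).tendsto a₀).div_const (1 - (K : ℝ))
    rwa [(hf a₀).fixedPoint_isFixedPt.eq, dist_self, zero_div] at this
  refine squeeze_zero (fun _ => dist_nonneg) (fun a => ?_) hmove
  rw [dist_comm]
  exact (hf a).dist_fixedPoint_le u

section LossDistribution

variable {p₀ : ℝ} {fL : ℝ → ℝ}

lemma lossCdf_mem_Icc (hp₀ : 0 ≤ p₀) (hf : ∀ ℓ, 0 < ℓ → 0 ≤ fL ℓ)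
    (hfint : IntegrableOn fL (Ioi 0)) (hftot : ∫ ℓ in Ioi (0:ℝ), fL ℓ = 1 - p₀)
    {b : ℝ} (hb : 0 ≤ b) : lossCdf p₀ fL b ∈ Icc 0 1 := by
  have hnonneg : 0 ≤ ∫ ℓ in Ioc (0:ℝ) b, fL ℓ :=
    setIntegral_nonneg measurableSet_Ioc fun ℓ hℓ => hf ℓ hℓ.1
  have hle : ∫ ℓ in Ioc (0:ℝ) b, fL ℓ ≤ 1 - p₀ :=
    hftot ▸ setIntegral_mono_set hfint
      ((ae_restrict_iff' measurableSet_Ioi).2 (ae_of_all _ hf)) Ioc_subset_Ioi_self.eventuallyLE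
  rw [lossCdf, intervalIntegral.integral_of_le hb]
  constructor <;> linarith

lemma intervalIntegral_id_mul_nonneg (hf : ∀ ℓ, 0 < ℓ → 0 ≤ fL ℓ) {b : ℝ} (hb : 0 ≤ b) :
    0 ≤ ∫ ℓ in (0:ℝ)..b, ℓ * fL ℓ := by
  rw [intervalIntegral.integral_of_le hb]
  exact setIntegral_nonneg measurableSet_Ioc fun ℓ hℓ => mul_nonneg hℓ.1.le (hf ℓ hℓ.1)

end LossDistribution

section Bellman

variable {N : ℕ} {p₀ δ : ℝ} {fL η : ℝ → ℝ}

lemma swProb_mem_Icc (hη01 : ∀ t, η t ∈ Icc (0:ℝ) 1) (c : Fin 2 → Fin N → ℝ) (n : Fin N)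
    (i : Fin 2) : swProb η c n i ∈ Icc (0:ℝ) 1 := by
  have h := hη01 (c 1 (rdown n) - c 0 (rdown n))
  unfold swProb
  split_ifs <;> constructor <;> linarith [h.1, h.2]

lemma continuous_swProb (hηc : Continuous η) (n : Fin N) (i : Fin 2) :
    Continuous fun c : Fin 2 → Fin N → ℝ => swProb η c n i := by
  unfold swProb
  split_ifs <;> fun_prop

/-- `W↓` and `W↑` both have this shape, with `m = n↓` resp. `m = n↑`. -/
lemma abs_switchMix_sub_le (hη01 : ∀ t, η t ∈ Icc (0:ℝ) 1) (c : Fin 2 → Fin N → ℝ)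
    (v w : Fin N × Fin 2 → ℝ) (n m : Fin N) (i : Fin 2) :
    |(1 - swProb η c n i) * v (m, i) + swProb η c n i * v (m, i + 1)
      - ((1 - swProb η c n i) * w (m, i) + swProb η c n i * w (m, i + 1))| ≤ dist v w := by
  have hσ := swProb_mem_Icc hη01 c n i
  have hdist : ∀ y, |v y - w y| ≤ dist v w := fun y => by
    rw [← Real.dist_eq]; exact dist_le_pi_dist v w y
  calc _ = |(1 - swProb η c n i) * (v (m, i) - w (m, i))
          + swProb η c n i * (v (m, i + 1) - w (m, i + 1))| := by ring_nf
    _ ≤ _ := abs_add_mul_le_max (by linarith [hσ.2]) hσ.1 (by ring)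
    _ ≤ dist v w := max_le (hdist _) (hdist _)

lemma abs_Wdown_sub_le (hη01 : ∀ t, η t ∈ Icc (0:ℝ) 1) (c : Fin 2 → Fin N → ℝ)
    (v w : Fin N × Fin 2 → ℝ) (n : Fin N) (i : Fin 2) :
    |Wdown η c v n i - Wdown η c w n i| ≤ dist v w :=
  abs_switchMix_sub_le hη01 c v w n (rdown n) i

lemma abs_Wup_sub_le (hη01 : ∀ t, η t ∈ Icc (0:ℝ) 1) (c : Fin 2 → Fin N → ℝ)
    (v w : Fin N × Fin 2 → ℝ) (n : Fin N) (i : Fin 2) :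
    |Wup η c v n i - Wup η c w n i| ≤ dist v w :=
  abs_switchMix_sub_le hη01 c v w n (rup n) i

lemma continuous_Wdown (hηc : Continuous η) {V : (Fin 2 → Fin N → ℝ) → Fin N × Fin 2 → ℝ}
    (hV : Continuous V) (n : Fin N) (i : Fin 2) :
    Continuous fun c => Wdown η c (V c) n i := by
  have := continuous_swProb hηc n i
  unfold Wdown
  fun_prop

lemma continuous_Wup (hηc : Continuous η) {V : (Fin 2 → Fin N → ℝ) → Fin N × Fin 2 → ℝ}
    (hV : Continuous V) (n : Fin N) (i : Fin 2) :
    Continuous fun c => Wup η c (V c) n i := by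
  have := continuous_swProb hηc n i
  unfold Wup
  fun_prop

lemma bellObj_bddBelow (hδ : 0 ≤ δ) (hf : ∀ ℓ, 0 < ℓ → 0 ≤ fL ℓ)
    (hF : ∀ b, 0 ≤ b → lossCdf p₀ fL b ∈ Icc (0:ℝ) 1) (c : Fin 2 → Fin N → ℝ)
    (v : Fin N × Fin 2 → ℝ) (x : Fin N × Fin 2) :
    BddBelow (Set.range fun b : {b : ℝ // 0 ≤ b} => bellObj p₀ δ fL η c v x b) := by
  refine ⟨δ * (c x.2 x.1 - max |Wdown η c v x.1 x.2| |Wup η c v x.1 x.2|), ?_⟩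
  rintro _ ⟨⟨b, hb⟩, rfl⟩
  have hFb := hF b hb
  have hmix := neg_abs_le (lossCdf p₀ fL b * Wdown η c v x.1 x.2
    + (1 - lossCdf p₀ fL b) * Wup η c v x.1 x.2)
  have hmix_le := abs_add_mul_le_max (a := Wdown η c v x.1 x.2) (b := Wup η c v x.1 x.2)
    hFb.1 (sub_nonneg.2 hFb.2) (add_sub_cancel _ _)
  have hI := intervalIntegral_id_mul_nonneg hf hb
  simp only [bellObj]
  gcongr
  linarith

lemma abs_bellObj_sub_le (hδ : 0 ≤ δ) (hF : ∀ b, 0 ≤ b → lossCdf p₀ fL b ∈ Icc (0:ℝ) 1)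
    (c c' : Fin 2 → Fin N → ℝ) (v w : Fin N × Fin 2 → ℝ) (x : Fin N × Fin 2) {b : ℝ}
    (hb : 0 ≤ b) :
    |bellObj p₀ δ fL η c v x b - bellObj p₀ δ fL η c' w x b| ≤
      δ * (|c x.2 x.1 - c' x.2 x.1| + max |Wdown η c v x.1 x.2 - Wdown η c' w x.1 x.2|
        |Wup η c v x.1 x.2 - Wup η c' w x.1 x.2|) := by
  obtain ⟨hF0, hF1⟩ := hF b hb
  calc _ = |δ| * |(c x.2 x.1 - c' x.2 x.1)
          + (lossCdf p₀ fL b * (Wdown η c v x.1 x.2 - Wdown η c' w x.1 x.2)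
            + (1 - lossCdf p₀ fL b) * (Wup η c v x.1 x.2 - Wup η c' w x.1 x.2))| := by
        rw [← abs_mul, bellObj, bellObj]
        ring_nf
    _ ≤ _ := by
      rw [abs_of_nonneg hδ]
      gcongr
      refine (abs_add_le _ _).trans ?_
      gcongr
      exact abs_add_mul_le_max hF0 (sub_nonneg.2 hF1) (add_sub_cancel _ _)

lemma abs_bellOp_sub_le (hδ : 0 ≤ δ) (hf : ∀ ℓ, 0 < ℓ → 0 ≤ fL ℓ)
    (hF : ∀ b, 0 ≤ b → lossCdf p₀ fL b ∈ Icc (0:ℝ) 1)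
    (c c' : Fin 2 → Fin N → ℝ) (v w : Fin N × Fin 2 → ℝ) (x : Fin N × Fin 2) :
    |bellOp p₀ δ fL η c v x - bellOp p₀ δ fL η c' w x| ≤
      δ * (|c x.2 x.1 - c' x.2 x.1| + max |Wdown η c v x.1 x.2 - Wdown η c' w x.1 x.2|
        |Wup η c v x.1 x.2 - Wup η c' w x.1 x.2|) :=
  have : Nonempty {b : ℝ // 0 ≤ b} := ⟨⟨0, le_rfl⟩⟩
  abs_ciInf_sub_ciInf_le (bellObj_bddBelow hδ hf hF c v x) (bellObj_bddBelow hδ hf hF c' w x)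
    fun b => abs_bellObj_sub_le hδ hF c c' v w x b.2

lemma contractingWith_bellOp (hδ0 : 0 ≤ δ) (hδ1 : δ < 1) (hf : ∀ ℓ, 0 < ℓ → 0 ≤ fL ℓ)
    (hF : ∀ b, 0 ≤ b → lossCdf p₀ fL b ∈ Icc (0:ℝ) 1) (hη01 : ∀ t, η t ∈ Icc (0:ℝ) 1)
    (c : Fin 2 → Fin N → ℝ) : ContractingWith ⟨δ, hδ0⟩ (bellOp p₀ δ fL η c) := by
  refine ⟨hδ1, LipschitzWith.of_dist_le_mul fun v w => ?_⟩
  refine (dist_pi_le_iff (mul_nonneg hδ0 dist_nonneg)).2 fun x => ?_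
  calc dist (bellOp p₀ δ fL η c v x) (bellOp p₀ δ fL η c w x)
      ≤ δ * (|c x.2 x.1 - c x.2 x.1| + max |Wdown η c v x.1 x.2 - Wdown η c w x.1 x.2|
          |Wup η c v x.1 x.2 - Wup η c w x.1 x.2|) := abs_bellOp_sub_le hδ0 hf hF c c v w x
    _ ≤ δ * dist v w := by
      rw [sub_self, abs_zero, zero_add]
      gcongr
      exact max_le (abs_Wdown_sub_le hη01 c v w _ _) (abs_Wup_sub_le hη01 c v w _ _)

lemma continuous_bellOp (hδ : 0 ≤ δ) (hf : ∀ ℓ, 0 < ℓ → 0 ≤ fL ℓ)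
    (hF : ∀ b, 0 ≤ b → lossCdf p₀ fL b ∈ Icc (0:ℝ) 1) (hηc : Continuous η)
    (v : Fin N × Fin 2 → ℝ) : Continuous fun c => bellOp p₀ δ fL η c v := by
  refine continuous_pi fun x => continuous_iff_continuousAt.2 fun c₀ => ?_
  have hWd := continuous_Wdown hηc (continuous_const (y := v)) x.1 x.2
  have hWu := continuous_Wup hηc (continuous_const (y := v)) x.1 x.2
  set D : (Fin 2 → Fin N → ℝ) → ℝ := fun c => δ * (|c x.2 x.1 - c₀ x.2 x.1|
    + max |Wdown η c v x.1 x.2 - Wdown η c₀ v x.1 x.2| |Wup η c v x.1 x.2 - Wup η c₀ v x.1 x.2|)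
  have hD : Tendsto D (𝓝 c₀) (𝓝 0) := by
    have hDc : Continuous D := by fun_prop
    simpa [D] using hDc.tendsto c₀
  exact tendsto_iff_norm_sub_tendsto_zero.2 <|
    squeeze_zero (fun _ => norm_nonneg _) (fun c => abs_bellOp_sub_le hδ hf hF c c₀ v v x) hD

end Bellman

theorem stmt_1_general (N : ℕ) (p₀ δ μ M : ℝ) (fL η : ℝ → ℝ)
    (hp₀ : p₀ ∈ Set.Ioo (0:ℝ) 1) (hδ : δ ∈ Set.Ioo (0:ℝ) 1)
    (hfpos : ∀ ℓ : ℝ, 0 < ℓ → 0 < fL ℓ)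
    (hfint : IntegrableOn fL (Set.Ioi 0))
    (hftot : ∫ ℓ in Set.Ioi (0:ℝ), fL ℓ = 1 - p₀)
    (hηc : Continuous η) (hη01 : ∀ t : ℝ, η t ∈ Set.Icc (0:ℝ) 1) :
    ∃ V : (Fin 2 → Fin N → ℝ) → (Fin N × Fin 2 → ℝ),
      (∀ c ∈ premSet N μ M,
        bellOp p₀ δ fL η c (V c) = V c ∧
        ∀ v : Fin N × Fin 2 → ℝ, bellOp p₀ δ fL η c v = v → v = V c) ∧
      (∀ x : Fin N × Fin 2,
        ContinuousOn (fun c : Fin 2 → Fin N → ℝ => V c x) (premSet N μ M) ∧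
        ContinuousOn
          (fun c : Fin 2 → Fin N → ℝ =>
            max 0 (Wup η c (V c) x.1 x.2 - Wdown η c (V c) x.1 x.2))
          (premSet N μ M)) := by
  have hf : ∀ ℓ, 0 < ℓ → 0 ≤ fL ℓ := fun ℓ hℓ => (hfpos ℓ hℓ).le
  have hF : ∀ b, 0 ≤ b → lossCdf p₀ fL b ∈ Icc (0:ℝ) 1 :=
    fun _ => lossCdf_mem_Icc hp₀.1.le hf hfint hftot
  have hL := contractingWith_bellOp (N := N) hδ.1.le hδ.2 hf hF hη01
  have hV : Continuous fun c => ContractingWith.fixedPoint _ (hL c) :=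
    ContractingWith.continuous_fixedPoint hL (continuous_bellOp hδ.1.le hf hF hηc)
  refine ⟨fun c => ContractingWith.fixedPoint _ (hL c), fun c _ =>
    ⟨(hL c).fixedPoint_isFixedPt, fun v hv => (hL c).fixedPoint_unique hv⟩, fun x => ⟨?_, ?_⟩⟩
  · exact ((continuous_apply x).comp hV).continuousOn
  · exact (continuous_const.max ((continuous_Wup hηc hV x.1 x.2).sub
      (continuous_Wdown hηc hV x.1 x.2))).continuousOn

/-- for every admissible premium pair `c`, the Bellman operator has a
unique fixed point `V*_c`, and both the value function `c ↦ V*_c(n,i)` and the optimal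
barrier `c ↦ max 0 (W↑(n,i;V*_c) − W↓(n,i;V*_c))` are continuous in `c`. -/
theorem stmt_1 (N : ℕ) (p₀ δ μ M : ℝ) (fL η : ℝ → ℝ)
    (hN : 2 ≤ N) (hp₀ : p₀ ∈ Set.Ioo (0:ℝ) 1) (hδ : δ ∈ Set.Ioo (0:ℝ) 1)
    (hfc : ContinuousOn fL (Set.Ioi 0)) (hfpos : ∀ ℓ : ℝ, 0 < ℓ → 0 < fL ℓ)
    (hfint : IntegrableOn fL (Set.Ioi 0))
    (hftot : ∫ ℓ in Set.Ioi (0:ℝ), fL ℓ = 1 - p₀)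
    (hmint : IntegrableOn (fun ℓ => ℓ * fL ℓ) (Set.Ioi 0))
    (hμ : μ = ∫ ℓ in Set.Ioi (0:ℝ), ℓ * fL ℓ) (hμpos : 0 < μ) (hM : μ ≤ M)
    (hηc : Continuous η) (hηm : Monotone η) (hη01 : ∀ t : ℝ, η t ∈ Set.Icc (0:ℝ) 1) :
    ∃ V : (Fin 2 → Fin N → ℝ) → (Fin N × Fin 2 → ℝ),
      (∀ c ∈ premSet N μ M,
        bellOp p₀ δ fL η c (V c) = V c ∧
        ∀ v : Fin N × Fin 2 → ℝ, bellOp p₀ δ fL η c v = v → v = V c) ∧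
      (∀ x : Fin N × Fin 2,
        ContinuousOn (fun c : Fin 2 → Fin N → ℝ => V c x) (premSet N μ M) ∧
        ContinuousOn
          (fun c : Fin 2 → Fin N → ℝ =>
            max 0 (Wup η c (V c) x.1 x.2 - Wdown η c (V c) x.1 x.2))
          (premSet N μ M)) :=
  stmt_1_general N p₀ δ μ M fL η hp₀ hδ hfpos hfint hftot hηc hη01
end
end

section
/- Let p₀ ≥ 0 and let f : (0,∞) → ℝ be continuous with f(ℓ) > 0 for all ℓ > 0 and ∫₀^∞ f(ℓ)dℓ ≤ 1; set F(x) := p₀ + ∫₀ˣ f(ℓ)dℓ. Let U : ℝ → ℝ be a continuous, strictly increasing bijection, let c ∈ ℝ, and let α, β ∈ ℝ. Define Q̃ : [0,∞) → ℝ by Q̃(b) := ∫₀ᵇ U(c + ℓ) f(ℓ)dℓ + F(b)·α + (1 − F(b))·β. Then Q̃ attains its minimum over [0,∞) at the unique point b̃* = max(0, U⁻¹(β − α) − c); that is, Q̃(b̃*) ≤ Q̃(b) for all b ≥ 0, with equality only when b = b̃*. -/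
/-!
Writing `r = β - α`, the objective is, up to a constant, `b ↦ ∫₀ᵇ (U(c + ℓ) - r) f(ℓ) dℓ`.
Since `U` is strictly increasing and `f > 0`, the integrand is negative for `ℓ < U⁻¹(r) - c`
and positive beyond it, so the running integral strictly decreases up to
`max 0 (U⁻¹(r) - c)` and strictly increases afterwards.
-/

open MeasureTheory Set

/-- The one-step objective of a risk-averse insured: expected utility of hidden
losses plus probability-weighted continuation values `α` (bonus, probability
`F(b) = p₀ + ∫₀ᵇ f`) and `β` (malus). -/
noncomputable def QobjU (p₀ : ℝ) (f U : ℝ → ℝ) (c α β b : ℝ) : ℝ :=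
  (∫ ℓ in (0:ℝ)..b, U (c + ℓ) * f ℓ) + (p₀ + ∫ ℓ in (0:ℝ)..b, f ℓ) * α
    + (1 - (p₀ + ∫ ℓ in (0:ℝ)..b, f ℓ)) * β

theorem IntervalIntegrable.monotone_mul {μ : Measure ℝ} {f g : ℝ → ℝ} {a b : ℝ}
    (hf : IntervalIntegrable f μ a b) (hg : Monotone g) :
    IntervalIntegrable (fun x => g x * f x) μ a b := by
  rw [intervalIntegrable_iff] at hf ⊢
  refine hf.bdd_mul (c := max |g (min a b)| |g (max a b)|) hg.measurable.aestronglyMeasurable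
    ((ae_restrict_iff' measurableSet_uIoc).2 (ae_of_all _ fun x hx => ?_))
  have hx' := uIoc_subset_uIcc hx
  exact abs_le_max_abs_abs (hg hx'.1) (hg hx'.2)

theorem integral_lt_integral_of_neg_of_pos {g : ℝ → ℝ} {a s b : ℝ}
    (hs : IntervalIntegrable g volume a s) (hb : IntervalIntegrable g volume a b)
    (hneg : ∀ x ∈ Ioo a s, g x < 0) (hpos : ∀ x ∈ Ioi s, 0 < g x)
    (hab : a ≤ b) (hbs : b ≠ s) :
    ∫ x in a..s, g x < ∫ x in a..b, g x := by
  rw [← sub_pos, intervalIntegral.integral_interval_sub_left hb hs]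
  have hsb : IntervalIntegrable g volume s b := hs.symm.trans hb
  rcases hbs.lt_or_gt with hlt | hgt
  · have h : 0 < ∫ x in b..s, -g x :=
      intervalIntegral.intervalIntegral_pos_of_pos_on hsb.symm.neg
        (fun x hx => neg_pos.2 (hneg x ⟨hab.trans_lt hx.1, hx.2⟩)) hlt
    rw [intervalIntegral.integral_neg] at h
    rwa [intervalIntegral.integral_symm]
  · exact intervalIntegral.intervalIntegral_pos_of_pos_on hsb (fun x hx => hpos x hx.1) hgt

theorem QobjU_eq_integral_add_const {p₀ : ℝ} {f U : ℝ → ℝ} {b : ℝ}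
    (hf : IntervalIntegrable f volume 0 b)
    (hU : Monotone U) (c α β : ℝ) :
    QobjU p₀ f U c α β b =
      (∫ ℓ in (0:ℝ)..b, (U (c + ℓ) - (β - α)) * f ℓ) + (p₀ * α + (1 - p₀) * β) := by
  have hUf : IntervalIntegrable (fun ℓ => U (c + ℓ) * f ℓ) volume 0 b :=
    hf.monotone_mul (hU.comp (monotone_id.const_add c))
  have hsplit : ∫ ℓ in (0:ℝ)..b, (U (c + ℓ) - (β - α)) * f ℓ
      = (∫ ℓ in (0:ℝ)..b, U (c + ℓ) * f ℓ) - (β - α) * ∫ ℓ in (0:ℝ)..b, f ℓ := by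
    rw [← intervalIntegral.integral_const_mul,
      ← intervalIntegral.integral_sub hUf (hf.const_mul _)]
    congr 1
    funext ℓ
    ring
  rw [QobjU, hsplit]
  ring

theorem stmt_3_general (p₀ : ℝ) (f : ℝ → ℝ)
    (hfpos : ∀ ℓ : ℝ, 0 < ℓ → 0 < f ℓ)
    (hfint : IntegrableOn f (Set.Ioi 0))
    (U : ℝ → ℝ) (hUm : StrictMono U)
    (Uinv : ℝ → ℝ)
    (hUinvR : Function.RightInverse Uinv U)
    (c α β : ℝ) :
    (∀ b : ℝ, 0 ≤ b →
      QobjU p₀ f U c α β (max 0 (Uinv (β - α) - c)) ≤ QobjU p₀ f U c α β b) ∧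
    (∀ b : ℝ, 0 ≤ b →
      QobjU p₀ f U c α β b = QobjU p₀ f U c α β (max 0 (Uinv (β - α) - c)) →
      b = max 0 (Uinv (β - α) - c)) := by
  set r := β - α
  set s := max 0 (Uinv r - c)
  have hf : ∀ b, 0 ≤ b → IntervalIntegrable f volume 0 b := fun b hb =>
    (intervalIntegrable_iff_integrableOn_Ioc_of_le hb).2 (hfint.mono_set Ioc_subset_Ioi_self)
  have hs : 0 ≤ s := le_max_left _ _
  have hshift : Monotone fun ℓ => U (c + ℓ) - r :=
    fun _ _ h => sub_le_sub_right (hUm.monotone (add_le_add_right h c)) r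
  have hneg : ∀ x ∈ Ioo 0 s, (U (c + x) - r) * f x < 0 := fun x hx => by
    have hxr : c + x < Uinv r := by
      rcases lt_max_iff.1 hx.2 with h | h <;> linarith [hx.1]
    exact mul_neg_of_neg_of_pos (sub_neg.2 (hUinvR r ▸ hUm hxr)) (hfpos x hx.1)
  have hpos : ∀ x ∈ Ioi s, 0 < (U (c + x) - r) * f x := fun x hx => by
    have hxr : Uinv r < c + x := by linarith [le_max_right 0 (Uinv r - c), mem_Ioi.1 hx]
    exact mul_pos (sub_pos.2 (hUinvR r ▸ hUm hxr)) (hfpos x (hs.trans_lt hx))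
  have key : ∀ b, 0 ≤ b → b ≠ s → QobjU p₀ f U c α β s < QobjU p₀ f U c α β b := by
    intro b hb hbs
    rw [QobjU_eq_integral_add_const (hf b hb) hUm.monotone,
      QobjU_eq_integral_add_const (hf s hs) hUm.monotone]
    exact add_lt_add_left (integral_lt_integral_of_neg_of_pos
      ((hf s hs).monotone_mul hshift) ((hf b hb).monotone_mul hshift) hneg hpos hb hbs) _
  refine ⟨fun b hb => ?_, fun b hb heq => by_contra fun hbs => (key b hb hbs).ne' heq⟩
  rcases eq_or_ne b s with rfl | hbs
  · exact le_rfl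
  · exact (key b hb hbs).le

/-- `Q̃` attains its minimum over `[0,∞)` at the unique point
`b̃* = max 0 (U⁻¹(β − α) − c)`. -/
theorem stmt_3 (p₀ : ℝ) (hp₀ : 0 ≤ p₀) (f : ℝ → ℝ)
    (hfc : ContinuousOn f (Set.Ioi 0)) (hfpos : ∀ ℓ : ℝ, 0 < ℓ → 0 < f ℓ)
    (hfint : IntegrableOn f (Set.Ioi 0))
    (hle : ∫ ℓ in Set.Ioi (0:ℝ), f ℓ ≤ 1)
    (U : ℝ → ℝ) (hUc : Continuous U) (hUm : StrictMono U)
    (hUb : Function.Bijective U)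
    (Uinv : ℝ → ℝ) (hUinvL : Function.LeftInverse Uinv U)
    (hUinvR : Function.RightInverse Uinv U)
    (c α β : ℝ) :
    (∀ b : ℝ, 0 ≤ b →
      QobjU p₀ f U c α β (max 0 (Uinv (β - α) - c)) ≤ QobjU p₀ f U c α β b) ∧
    (∀ b : ℝ, 0 ≤ b →
      QobjU p₀ f U c α β b = QobjU p₀ f U c α β (max 0 (Uinv (β - α) - c)) →
      b = max 0 (Uinv (β - α) - c)) :=
  stmt_3_general p₀ f hfpos hfint U hUm Uinv hUinvR c α β
end

section
/- In the N-class model, let V* : X → ℝ be the unique fixed point of the Bellman operator L_c. Then for every state (n,i) ∈ X, the infimum over b ≥ 0 defining (L_c V*)(n,i) is attained at the unique point b*(n,i) := max(0, W↑(n,i;V*) − W↓(n,i;V*)); in particular b*(n,i) > 0 if and only if W↑(n,i;V*) > W↓(n,i;V*). -/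
noncomputable section

open MeasureTheory Set

/-!
Moving the barrier from `a` to `b` changes the objective by
`δ ∫ₐᵇ (ℓ - Δ) f_L(ℓ) dℓ` with `Δ = W↑ - W↓`: reporting a loss `ℓ` costs `ℓ` now but saves
`Δ` later. Since `f_L > 0` on `(0, ∞)`, this integrand is positive to the right of `Δ` and
negative to its left, so `max 0 Δ` is the unique minimiser over `b ≥ 0`.
-/

lemma MeasureTheory.IntegrableOn.intervalIntegrable_of_nonneg {g : ℝ → ℝ}
    (hg : IntegrableOn g (Ioi 0)) {a b : ℝ} (ha : 0 ≤ a) (hb : 0 ≤ b) :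
    IntervalIntegrable g volume a b :=
  (intervalIntegrable_iff).2 <| hg.mono_set fun _ hx => (le_min ha hb).trans_lt hx.1

lemma integral_sub_mul_pos_of_ne_max_zero {f : ℝ → ℝ} (hf : ∀ ℓ, 0 < ℓ → 0 < f ℓ)
    {Δ b : ℝ} (hint : IntervalIntegrable (fun ℓ => (ℓ - Δ) * f ℓ) volume (max 0 Δ) b)
    (hb : 0 ≤ b) (hne : b ≠ max 0 Δ) :
    0 < ∫ ℓ in max 0 Δ..b, (ℓ - Δ) * f ℓ := by
  rcases hne.lt_or_gt with hlt | hgt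
  · have hΔ : max 0 Δ = Δ := max_eq_right <| by
      by_contra! h
      rw [max_eq_left h.le] at hlt
      linarith
    rw [intervalIntegral.integral_symm, ← intervalIntegral.integral_neg]
    refine intervalIntegral.intervalIntegral_pos_of_pos_on hint.symm.neg (fun ℓ hℓ => ?_) hlt
    have hℓΔ : ℓ < Δ := hΔ ▸ hℓ.2
    rw [← neg_mul]
    exact mul_pos (by linarith) (hf ℓ (hb.trans_lt hℓ.1))
  · refine intervalIntegral.intervalIntegral_pos_of_pos_on hint (fun ℓ hℓ => ?_) hgt
    exact mul_pos (sub_pos.2 ((le_max_right 0 Δ).trans_lt hℓ.1))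
      (hf ℓ ((le_max_left 0 Δ).trans_lt hℓ.1))

section BarrierObjective

variable {N : ℕ} {p₀ δ : ℝ} {fL : ℝ → ℝ} (η : ℝ → ℝ) (c : Fin 2 → Fin N → ℝ)
  (v : Fin N × Fin 2 → ℝ) (x : Fin N × Fin 2)

lemma intervalIntegrable_sub_mul (hfint : IntegrableOn fL (Ioi 0))
    (hmint : IntegrableOn (fun ℓ => ℓ * fL ℓ) (Ioi 0)) {a b : ℝ} (ha : 0 ≤ a) (hb : 0 ≤ b)
    (Δ : ℝ) :
    IntervalIntegrable (fun ℓ => (ℓ - Δ) * fL ℓ) volume a b := by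
  simp_rw [sub_mul]
  exact (hmint.intervalIntegrable_of_nonneg ha hb).sub
    ((hfint.intervalIntegrable_of_nonneg ha hb).const_mul Δ)

lemma bellObj_sub_bellObj (hfint : IntegrableOn fL (Ioi 0))
    (hmint : IntegrableOn (fun ℓ => ℓ * fL ℓ) (Ioi 0)) {a b : ℝ} (ha : 0 ≤ a) (hb : 0 ≤ b) :
    bellObj p₀ δ fL η c v x b - bellObj p₀ δ fL η c v x a
      = δ * ∫ ℓ in a..b, (ℓ - (Wup η c v x.1 x.2 - Wdown η c v x.1 x.2)) * fL ℓ := by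
  set Δ := Wup η c v x.1 x.2 - Wdown η c v x.1 x.2
  have hm {a b : ℝ} := hmint.intervalIntegrable_of_nonneg (a := a) (b := b)
  have hf {a b : ℝ} := hfint.intervalIntegrable_of_nonneg (a := a) (b := b)
  simp_rw [sub_mul]
  rw [intervalIntegral.integral_sub (hm ha hb) ((hf ha hb).const_mul Δ),
    intervalIntegral.integral_const_mul,
    ← intervalIntegral.integral_interval_sub_left (hm le_rfl hb) (hm le_rfl ha),
    ← intervalIntegral.integral_interval_sub_left (hf le_rfl hb) (hf le_rfl ha)]
  simp only [bellObj, lossCdf]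
  ring

lemma bellObj_max_zero_lt (hδ : 0 < δ) (hfpos : ∀ ℓ, 0 < ℓ → 0 < fL ℓ)
    (hfint : IntegrableOn fL (Ioi 0)) (hmint : IntegrableOn (fun ℓ => ℓ * fL ℓ) (Ioi 0))
    (b : ℝ) (hb : 0 ≤ b)
    (hne : b ≠ max 0 (Wup η c v x.1 x.2 - Wdown η c v x.1 x.2)) :
    bellObj p₀ δ fL η c v x (max 0 (Wup η c v x.1 x.2 - Wdown η c v x.1 x.2))
      < bellObj p₀ δ fL η c v x b := by
  have h0 := le_max_left 0 (Wup η c v x.1 x.2 - Wdown η c v x.1 x.2)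
  rw [← sub_pos, bellObj_sub_bellObj η c v x hfint hmint h0 hb]
  exact mul_pos hδ <| integral_sub_mul_pos_of_ne_max_zero hfpos
    (intervalIntegrable_sub_mul hfint hmint h0 hb _) hb hne

end BarrierObjective

theorem stmt_5_general (N : ℕ) (p₀ δ : ℝ) (fL η : ℝ → ℝ)
    (hδ : δ ∈ Set.Ioo (0:ℝ) 1)
    (hfpos : ∀ ℓ : ℝ, 0 < ℓ → 0 < fL ℓ)
    (hfint : IntegrableOn fL (Set.Ioi 0))
    (hmint : IntegrableOn (fun ℓ => ℓ * fL ℓ) (Set.Ioi 0))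
    (c : Fin 2 → Fin N → ℝ)
    (V : Fin N × Fin 2 → ℝ) :
    ∀ x : Fin N × Fin 2,
      bellOp p₀ δ fL η c V x
        = bellObj p₀ δ fL η c V x (max 0 (Wup η c V x.1 x.2 - Wdown η c V x.1 x.2)) ∧
      (∀ b : ℝ, 0 ≤ b →
        bellObj p₀ δ fL η c V x (max 0 (Wup η c V x.1 x.2 - Wdown η c V x.1 x.2))
          ≤ bellObj p₀ δ fL η c V x b) ∧
      (∀ b : ℝ, 0 ≤ b →
        bellObj p₀ δ fL η c V x b
          = bellObj p₀ δ fL η c V x (max 0 (Wup η c V x.1 x.2 - Wdown η c V x.1 x.2)) →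
        b = max 0 (Wup η c V x.1 x.2 - Wdown η c V x.1 x.2)) ∧
      (0 < max 0 (Wup η c V x.1 x.2 - Wdown η c V x.1 x.2)
        ↔ Wdown η c V x.1 x.2 < Wup η c V x.1 x.2) := by
  intro x
  have hlt := bellObj_max_zero_lt (p₀ := p₀) η c V x hδ.1 hfpos hfint hmint
  set bs := max 0 (Wup η c V x.1 x.2 - Wdown η c V x.1 x.2) with hbs
  have hmin (b : ℝ) (hb : 0 ≤ b) : bellObj p₀ δ fL η c V x bs ≤ bellObj p₀ δ fL η c V x b := by
    rcases eq_or_ne b bs with rfl | hne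
    exacts [le_rfl, (hlt b hb hne).le]
  refine ⟨?_, hmin, fun b hb heq => ?_, by simp [hbs]⟩
  · unfold bellOp
    refine IsGLB.ciInf_eq (IsLeast.isGLB ⟨⟨⟨bs, le_max_left _ _⟩, rfl⟩, ?_⟩)
    rintro _ ⟨z, rfl⟩
    exact hmin z.1 z.2
  · by_contra hne
    exact (hlt b hb hne).ne' heq

/-- at the unique fixed point `V*` of the Bellman operator, the infimum
over `b ≥ 0` defining `(L_c V*)(n,i)` is attained at the unique point
`b*(n,i) = max 0 (W↑(n,i;V*) − W↓(n,i;V*))`; in particular `b*(n,i) > 0` iff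
`W↑(n,i;V*) > W↓(n,i;V*)`. -/
theorem stmt_5 (N : ℕ) (p₀ δ μ M : ℝ) (fL η : ℝ → ℝ)
    (hN : 2 ≤ N) (hp₀ : p₀ ∈ Set.Ioo (0:ℝ) 1) (hδ : δ ∈ Set.Ioo (0:ℝ) 1)
    (hfc : ContinuousOn fL (Set.Ioi 0)) (hfpos : ∀ ℓ : ℝ, 0 < ℓ → 0 < fL ℓ)
    (hfint : IntegrableOn fL (Set.Ioi 0))
    (hftot : ∫ ℓ in Set.Ioi (0:ℝ), fL ℓ = 1 - p₀)
    (hmint : IntegrableOn (fun ℓ => ℓ * fL ℓ) (Set.Ioi 0))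
    (hμ : μ = ∫ ℓ in Set.Ioi (0:ℝ), ℓ * fL ℓ) (hμpos : 0 < μ) (hM : μ ≤ M)
    (hηc : Continuous η) (hηm : Monotone η) (hη01 : ∀ t : ℝ, η t ∈ Set.Icc (0:ℝ) 1)
    (c : Fin 2 → Fin N → ℝ) (hc : c ∈ premSet N μ M)
    (V : Fin N × Fin 2 → ℝ)
    (hV : bellOp p₀ δ fL η c V = V)
    (hVuniq : ∀ v : Fin N × Fin 2 → ℝ, bellOp p₀ δ fL η c v = v → v = V) :
    ∀ x : Fin N × Fin 2,
      bellOp p₀ δ fL η c V x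
        = bellObj p₀ δ fL η c V x (max 0 (Wup η c V x.1 x.2 - Wdown η c V x.1 x.2)) ∧
      (∀ b : ℝ, 0 ≤ b →
        bellObj p₀ δ fL η c V x (max 0 (Wup η c V x.1 x.2 - Wdown η c V x.1 x.2))
          ≤ bellObj p₀ δ fL η c V x b) ∧
      (∀ b : ℝ, 0 ≤ b →
        bellObj p₀ δ fL η c V x b
          = bellObj p₀ δ fL η c V x (max 0 (Wup η c V x.1 x.2 - Wdown η c V x.1 x.2)) →
        b = max 0 (Wup η c V x.1 x.2 - Wdown η c V x.1 x.2)) ∧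
      (0 < max 0 (Wup η c V x.1 x.2 - Wdown η c V x.1 x.2)
        ↔ Wdown η c V x.1 x.2 < Wup η c V x.1 x.2) :=
  stmt_5_general N p₀ δ fL η hδ hfpos hfint hmint c V
end
end

section
/- In the 2-class premium game, fix θ₂ ∈ Θ and define the smooth branch J̃¹ : [μ, θ₂] → ℝ by J̃¹(θ₁) := η̂(θ₁)·(θ₁(â + κ(1−â)) − m̂), where η̂(θ₁) := 1 − (1−k₂)e^{−k₁(θ₂−θ₁)}, b̂(θ₁) := δ(κ−1)(η̂(θ₁)θ₁ + (1−η̂(θ₁))θ₂), â := F_L(b̂(θ₁)) and m̂ := ∫_{b̂(θ₁)}^∞ ℓ f_L(ℓ)dℓ (this agrees with J¹(θ₁;θ₂) for θ₁ ≤ θ₂). Assume (i) −e·k₁/(2e−1) ≤ f_L′(ℓ)/f_L(ℓ) ≤ k₁/2 for all ℓ ∈ I_L, and (ii) (1−δ)·k₁·M/κ ≤ A₁. If θ₁ ∈ [μ, θ₂] satisfies (J̃¹)′(θ₁) = 0, then (J̃¹)″(θ₁) < 0. -/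
noncomputable section

open MeasureTheory Set

/-- The exponential choice function `η`. -/
def expEta (k₁ k₂ t : ℝ) : ℝ :=
  if 0 ≤ t then 1 - (1 - k₂) * Real.exp (-(k₁ * t)) else k₂ * Real.exp (k₁ * t)

/-- Insureds' optimal reporting barrier `b*(θ₁,θ₂) = δ(κ−1)(η̄θ₁ + (1−η̄)θ₂)`. -/
def repBarrier (δ κ k₁ k₂ θ₁ θ₂ : ℝ) : ℝ :=
  δ * (κ - 1) * (expEta k₁ k₂ (θ₂ - θ₁) * θ₁ + (1 - expEta k₁ k₂ (θ₂ - θ₁)) * θ₂)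

/-- `a = F_L(b*(θ₁,θ₂))`: probability that the loss is hidden. -/
def aProb (p₀ : ℝ) (fL : ℝ → ℝ) (δ κ k₁ k₂ θ₁ θ₂ : ℝ) : ℝ :=
  lossCdf p₀ fL (repBarrier δ κ k₁ k₂ θ₁ θ₂)

/-- `m = ∫_{b*(θ₁,θ₂)}^∞ ℓ f_L(ℓ) dℓ`: expected reported loss. -/
def mRep (fL : ℝ → ℝ) (δ κ k₁ k₂ θ₁ θ₂ : ℝ) : ℝ :=
  ∫ ℓ in Set.Ioi (repBarrier δ κ k₁ k₂ θ₁ θ₂), ℓ * fL ℓ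

/-- Company 1's expected per-period profit `J¹(θ₁;θ₂)`. -/
def J1 (p₀ : ℝ) (fL : ℝ → ℝ) (δ κ k₁ k₂ θ₁ θ₂ : ℝ) : ℝ :=
  expEta k₁ k₂ (θ₂ - θ₁) *
    (θ₁ * (aProb p₀ fL δ κ k₁ k₂ θ₁ θ₂ + κ * (1 - aProb p₀ fL δ κ k₁ k₂ θ₁ θ₂))
      - mRep fL δ κ k₁ k₂ θ₁ θ₂)

/-- Company 2's expected per-period profit `J²(θ₂;θ₁)`. -/
def J2 (p₀ : ℝ) (fL : ℝ → ℝ) (δ κ k₁ k₂ θ₂ θ₁ : ℝ) : ℝ :=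
  (1 - expEta k₁ k₂ (θ₂ - θ₁)) *
    (θ₂ * (aProb p₀ fL δ κ k₁ k₂ θ₁ θ₂ + κ * (1 - aProb p₀ fL δ κ k₁ k₂ θ₁ θ₂))
      - mRep fL δ κ k₁ k₂ θ₁ θ₂)

/-- `A₁ = k₂(2−δk₂)/(2−k₂)`. -/
def A1 (δ k₂ : ℝ) : ℝ := k₂ * (2 - δ * k₂) / (2 - k₂)

/-- `A₂ = (1−k₂)(2−δ(1−k₂))/(1+k₂)`. -/
def A2 (δ k₂ : ℝ) : ℝ := (1 - k₂) * (2 - δ * (1 - k₂)) / (1 + k₂)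

/-- `m₁ = k₁/(δ(κ−1)²k₂·max(2A₁, 2δ−A₁))`. -/
def m1 (δ κ k₁ k₂ : ℝ) : ℝ :=
  k₁ / (δ * (κ - 1) ^ 2 * k₂ * max (2 * A1 δ k₂) (2 * δ - A1 δ k₂))

/-- `m₂ = k₁/(δ(κ−1)²(1−k₂)·max(2A₂, 2δ−A₂))`. -/
def m2 (δ κ k₁ k₂ : ℝ) : ℝ :=
  k₁ / (δ * (κ - 1) ^ 2 * (1 - k₂) * max (2 * A2 δ k₂) (2 * δ - A2 δ k₂))

/-- The premium strategy set `Θ = [μ, M/κ]`. -/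
def Theta (μ M κ : ℝ) : Set ℝ := Set.Icc μ (M / κ)

/-- The interval `I_L = [δ(κ−1)μ, δ(κ−1)M/κ]` of possible barriers. -/
def IL (δ κ μ M : ℝ) : Set ℝ := Set.Icc (δ * (κ - 1) * μ) (δ * (κ - 1) * (M / κ))

/-- The smooth branch of the choice function on `{θ₁ ≤ θ₂}`: `η̂(θ₁) = 1 − (1−k₂)e^{−k₁(θ₂−θ₁)}`. -/
def etaLow (k₁ k₂ θ₂ θ₁ : ℝ) : ℝ := 1 - (1 - k₂) * Real.exp (-(k₁ * (θ₂ - θ₁)))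

/-- The corresponding barrier `b̂(θ₁) = δ(κ−1)(η̂(θ₁)θ₁ + (1−η̂(θ₁))θ₂)`. -/
def bLow (δ κ k₁ k₂ θ₂ θ₁ : ℝ) : ℝ :=
  δ * (κ - 1) * (etaLow k₁ k₂ θ₂ θ₁ * θ₁ + (1 - etaLow k₁ k₂ θ₂ θ₁) * θ₂)

/-- The smooth branch `J̃¹(θ₁) = η̂(θ₁)·(θ₁(â + κ(1−â)) − m̂)` of Company 1's profit
on `{θ₁ ≤ θ₂}`. -/
def JLow (p₀ : ℝ) (fL : ℝ → ℝ) (δ κ k₁ k₂ θ₂ θ₁ : ℝ) : ℝ :=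
  etaLow k₁ k₂ θ₂ θ₁ *
    (θ₁ * (lossCdf p₀ fL (bLow δ κ k₁ k₂ θ₂ θ₁)
        + κ * (1 - lossCdf p₀ fL (bLow δ κ k₁ k₂ θ₂ θ₁)))
      - ∫ ℓ in Set.Ioi (bLow δ κ k₁ k₂ θ₂ θ₁), ℓ * fL ℓ)

/-! Write `J̃¹ = η̂ · P`, where `P(θ) = θ (a + κ (1 - a)) - m` is the margin per insured and
`u = 1 - η̂`, so that `η̂' = -k₁ u` and `η̂'' = -k₁² u`. At a stationary point `(1 - u) P' = k₁ u P`
with `P > 0`, which turns `(J̃¹)'' < 0` into `(1 - u) P'' < k₁ (1 + u) P'`. Differentiating under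
the barrier `b` gives `P'' = f b' (b' - 2(κ - 1)) + W (f' b'² + f b'')` with `W = b - (κ - 1) θ`;
the first term is negative since `b' < 2(κ - 1)`. If `W ≥ 0`, the upper bound `f' ≤ k₁ f / 2`
gives `(1 - u)(f' b'² + f b'') ≤ k₁ (1 + u) f b'`, and stationarity absorbs the rest. If `W < 0`,
then `W ≥ -(κ - 1)(1 - δ) θ`, and the lower bound on `f'/f` together with the premium cap (ii)
make `W (f' b'² + f b'')` no larger than the negative first term.

Both estimates use `k₁ u (θ₂ - θ) ≤ (1 - k₂)/e`, from `x e^{-x} ≤ 1/e`; the constants `37/100`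
and `614/1000` are decimal upper bounds for `1/e` and `e/(2e - 1)`. -/

open Filter Topology

theorem hasDerivAt_integral_Ioi {g : ℝ → ℝ} {a x : ℝ} (hg : IntegrableOn g (Ioi a))
    (hx : a < x) (hgx : ContinuousAt g x) :
    HasDerivAt (fun y => ∫ t in Ioi y, g t) (-g x) x := by
  have hint : IntervalIntegrable g volume a x :=
    (intervalIntegrable_iff_integrableOn_Ioc_of_le hx.le).2 (hg.mono_set Ioc_subset_Ioi_self)
  have h := (intervalIntegral.integral_hasDerivAt_right hint
    ⟨Ioi a, Ioi_mem_nhds hx, hg.aestronglyMeasurable⟩ hgx).const_sub (∫ t in Ioi a, g t)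
  refine h.congr_of_eventuallyEq ?_
  filter_upwards [Ioi_mem_nhds hx] with y hy
  rw [← intervalIntegral.integral_Ioi_sub_Ioi hg hy.le, sub_sub_cancel]

theorem integral_Ioi_lt_integral_Ioi {g : ℝ → ℝ} {a b : ℝ} (hg : IntegrableOn g (Ioi a))
    (hab : a < b) (hpos : ∀ x ∈ Ioo a b, 0 < g x) : ∫ x in Ioi b, g x < ∫ x in Ioi a, g x := by
  rw [← intervalIntegral.integral_interval_add_Ioi hg (hg.mono_set (Ioi_subset_Ioi hab.le))]
  have hint : IntervalIntegrable g volume a b :=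
    (intervalIntegrable_iff_integrableOn_Ioc_of_le hab.le).2 (hg.mono_set Ioc_subset_Ioi_self)
  linarith [intervalIntegral.intervalIntegral_pos_of_pos_on hint hpos hab]

theorem deriv_deriv_mul_eq {f g f' g' : ℝ → ℝ} {x f'' g'' : ℝ}
    (hf : ∀ᶠ y in 𝓝 x, HasDerivAt f (f' y) y) (hg : ∀ᶠ y in 𝓝 x, HasDerivAt g (g' y) y)
    (hf' : HasDerivAt f' f'' x) (hg' : HasDerivAt g' g'' x) :
    deriv (deriv fun y => f y * g y) x = f'' * g x + 2 * (f' x * g' x) + f x * g'' := by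
  have h : deriv (fun y => f y * g y) =ᶠ[𝓝 x] fun y => f' y * g y + f y * g' y := by
    filter_upwards [hf, hg] with y hfy hgy
    exact (hfy.mul hgy).deriv
  rw [h.deriv_eq]
  exact ((hf'.mul hg.self_of_nhds).add (hf.self_of_nhds.mul hg')).deriv.trans (by ring)

theorem hasDerivAt_lossCdf {p₀ x : ℝ} {fL : ℝ → ℝ} (hf : IntegrableOn fL (Ioi 0)) (hx : 0 < x)
    (hfx : ContinuousAt fL x) : HasDerivAt (lossCdf p₀ fL) (fL x) x := by
  have hint : IntervalIntegrable fL volume 0 x :=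
    (intervalIntegrable_iff_integrableOn_Ioc_of_le hx.le).2 (hf.mono_set Ioc_subset_Ioi_self)
  exact (intervalIntegral.integral_hasDerivAt_right hint
    ⟨Ioi 0, Ioi_mem_nhds hx, hf.aestronglyMeasurable⟩ hfx).const_add p₀

theorem lossCdf_le_one {p₀ b : ℝ} {fL : ℝ → ℝ} (hf : IntegrableOn fL (Ioi 0))
    (htot : ∫ ℓ in Ioi (0:ℝ), fL ℓ = 1 - p₀) (hb : 0 ≤ b) (hnn : ∀ ℓ, b < ℓ → 0 ≤ fL ℓ) :
    lossCdf p₀ fL b ≤ 1 := by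
  have hsplit := intervalIntegral.integral_interval_add_Ioi hf (hf.mono_set (Ioi_subset_Ioi hb))
  have htail : 0 ≤ ∫ ℓ in Ioi b, fL ℓ := setIntegral_nonneg measurableSet_Ioi hnn
  rw [lossCdf]
  linarith

def premiumFactor (p₀ : ℝ) (fL : ℝ → ℝ) (κ b : ℝ) : ℝ :=
  lossCdf p₀ fL b + κ * (1 - lossCdf p₀ fL b)

def premiumMargin (p₀ : ℝ) (fL : ℝ → ℝ) (κ b θ : ℝ) : ℝ :=
  θ * premiumFactor p₀ fL κ b - ∫ ℓ in Ioi b, ℓ * fL ℓ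

section Margin

variable {p₀ κ θ : ℝ} {fL β β' : ℝ → ℝ}

theorem hasDerivAt_premiumFactor {b : ℝ} (hf : IntegrableOn fL (Ioi 0)) (hb : 0 < b)
    (hfb : ContinuousAt fL b) : HasDerivAt (premiumFactor p₀ fL κ) ((1 - κ) * fL b) b := by
  have h := hasDerivAt_lossCdf (p₀ := p₀) hf hb hfb
  exact (h.add ((h.const_sub 1).const_mul κ)).congr_deriv (by ring)

theorem hasDerivAt_premiumMargin (hf : IntegrableOn fL (Ioi 0))
    (hm : IntegrableOn (fun ℓ => ℓ * fL ℓ) (Ioi 0)) (hβ : HasDerivAt β (β' θ) θ)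
    (hb : 0 < β θ) (hfb : ContinuousAt fL (β θ)) :
    HasDerivAt (fun θ => premiumMargin p₀ fL κ (β θ) θ)
      (premiumFactor p₀ fL κ (β θ) + fL (β θ) * β' θ * (β θ - (κ - 1) * θ)) θ := by
  have hQ := (hasDerivAt_premiumFactor (p₀ := p₀) (κ := κ) hf hb hfb).comp θ hβ
  have hT := (hasDerivAt_integral_Ioi hm hb (continuousAt_id.mul hfb)).comp θ hβ
  exact (((hasDerivAt_id θ).mul hQ).sub hT).congr_deriv
    (by simp only [Function.comp_apply, id]; ring)

theorem hasDerivAt_premiumMargin_deriv {f' β'' : ℝ} (hf : IntegrableOn fL (Ioi 0))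
    (hβ : HasDerivAt β (β' θ) θ) (hβ' : HasDerivAt β' β'' θ) (hb : 0 < β θ)
    (hfb : HasDerivAt fL f' (β θ)) :
    HasDerivAt (fun θ => premiumFactor p₀ fL κ (β θ) + fL (β θ) * β' θ * (β θ - (κ - 1) * θ))
      (fL (β θ) * β' θ * (β' θ - 2 * (κ - 1))
        + (β θ - (κ - 1) * θ) * (f' * β' θ ^ 2 + fL (β θ) * β'')) θ := by
  have hQ := (hasDerivAt_premiumFactor (p₀ := p₀) (κ := κ) hf hb hfb.continuousAt).comp θ hβ
  have hW := hβ.sub ((hasDerivAt_id θ).const_mul (κ - 1))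
  exact (hQ.add (((hfb.comp θ hβ).mul hβ').mul hW)).congr_deriv
    (by simp only [Function.comp_apply, Pi.mul_apply, Pi.sub_apply, id]; ring)

end Margin

section Barrier

variable {δ κ k₁ k₂ θ₂ θ : ℝ}

theorem hasDerivAt_etaLow :
    HasDerivAt (etaLow k₁ k₂ θ₂) (-(k₁ * (1 - etaLow k₁ k₂ θ₂ θ))) θ := by
  have h := ((((hasDerivAt_id θ).const_sub θ₂).const_mul k₁).neg.exp.const_mul (1 - k₂)).const_sub 1
  exact h.congr_deriv (by simp only [etaLow, Pi.neg_apply, id]; ring)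

theorem hasDerivAt_etaLow_deriv :
    HasDerivAt (fun θ => -(k₁ * (1 - etaLow k₁ k₂ θ₂ θ))) (-(k₁ ^ 2 * (1 - etaLow k₁ k₂ θ₂ θ))) θ :=
  ((hasDerivAt_etaLow.const_sub 1).const_mul k₁).neg.congr_deriv (by ring)

def bLowDeriv (δ κ k₁ k₂ θ₂ θ : ℝ) : ℝ :=
  δ * (κ - 1) * (etaLow k₁ k₂ θ₂ θ + k₁ * (1 - etaLow k₁ k₂ θ₂ θ) * (θ₂ - θ))

theorem bLow_eq : bLow δ κ k₁ k₂ θ₂ θ = δ * (κ - 1) * (θ + (1 - etaLow k₁ k₂ θ₂ θ) * (θ₂ - θ)) := by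
  rw [bLow]; ring

theorem hasDerivAt_bLow : HasDerivAt (bLow δ κ k₁ k₂ θ₂) (bLowDeriv δ κ k₁ k₂ θ₂ θ) θ := by
  have hη := hasDerivAt_etaLow (k₁ := k₁) (k₂ := k₂) (θ₂ := θ₂) (θ := θ)
  have h := ((hasDerivAt_id θ).add
    ((hη.const_sub 1).mul ((hasDerivAt_id θ).const_sub θ₂))).const_mul (δ * (κ - 1))
  refine (h.congr_deriv ?_).congr_of_eventuallyEq (.of_forall fun _ => bLow_eq)
  simp only [bLowDeriv, id]
  ring

theorem hasDerivAt_bLowDeriv :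
    HasDerivAt (bLowDeriv δ κ k₁ k₂ θ₂)
      (δ * (κ - 1) * k₁ * (1 - etaLow k₁ k₂ θ₂ θ) * (k₁ * (θ₂ - θ) - 2)) θ := by
  have hη := hasDerivAt_etaLow (k₁ := k₁) (k₂ := k₂) (θ₂ := θ₂) (θ := θ)
  have h := (hη.add
    (((hη.const_sub 1).const_mul k₁).mul ((hasDerivAt_id θ).const_sub θ₂))).const_mul (δ * (κ - 1))
  exact h.congr_deriv (by simp only [id]; ring)

theorem one_sub_etaLow : 1 - etaLow k₁ k₂ θ₂ θ = (1 - k₂) * Real.exp (-(k₁ * (θ₂ - θ))) :=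
  sub_sub_cancel _ _

theorem one_sub_etaLow_pos (hk₂ : k₂ < 1) : 0 < 1 - etaLow k₁ k₂ θ₂ θ := by
  rw [one_sub_etaLow]
  exact mul_pos (sub_pos.2 hk₂) (Real.exp_pos _)

theorem one_sub_etaLow_le (hk₁ : 0 ≤ k₁) (hk₂ : k₂ ≤ 1) (hθ : θ ≤ θ₂) :
    1 - etaLow k₁ k₂ θ₂ θ ≤ 1 - k₂ := by
  rw [one_sub_etaLow]
  refine mul_le_of_le_one_right (sub_nonneg.2 hk₂) (Real.exp_le_one_iff.2 ?_)
  nlinarith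

theorem mul_one_sub_etaLow_le (hk₂ : k₂ ≤ 1) :
    k₁ * (1 - etaLow k₁ k₂ θ₂ θ) * (θ₂ - θ) ≤ 37 / 100 * (1 - k₂) := by
  have h : k₁ * (1 - etaLow k₁ k₂ θ₂ θ) * (θ₂ - θ)
      = (1 - k₂) * (k₁ * (θ₂ - θ) * Real.exp (-(k₁ * (θ₂ - θ)))) := by
    rw [one_sub_etaLow]; ring
  rw [h, mul_comm (37 / 100)]
  refine mul_le_mul_of_nonneg_left ?_ (sub_nonneg.2 hk₂)
  linarith [Real.mul_exp_neg_le_exp_neg_one (k₁ * (θ₂ - θ)), Real.exp_neg_one_lt_d9]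

theorem mul_le_bLow (hc : 0 ≤ δ * (κ - 1)) (hk₂ : k₂ < 1) (hθ : θ ≤ θ₂) :
    δ * (κ - 1) * θ ≤ bLow δ κ k₁ k₂ θ₂ θ := by
  rw [bLow_eq]
  refine mul_le_mul_of_nonneg_left (le_add_of_nonneg_right ?_) hc
  exact mul_nonneg (one_sub_etaLow_pos hk₂).le (sub_nonneg.2 hθ)

theorem bLow_le_mul (hc : 0 ≤ δ * (κ - 1)) (hk₁ : 0 ≤ k₁) (hk₂ : 0 ≤ k₂) (hk₂1 : k₂ ≤ 1)
    (hθ : θ ≤ θ₂) : bLow δ κ k₁ k₂ θ₂ θ ≤ δ * (κ - 1) * θ₂ := by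
  rw [bLow_eq]
  refine mul_le_mul_of_nonneg_left ?_ hc
  nlinarith [one_sub_etaLow_le hk₁ hk₂1 hθ]

theorem bLow_mem_IL {μ M : ℝ} (hc : 0 ≤ δ * (κ - 1)) (hk₁ : 0 ≤ k₁) (hk₂ : 0 ≤ k₂)
    (hk₂1 : k₂ < 1) (hμ : μ ≤ θ) (hθ : θ ≤ θ₂) (hθ₂ : θ₂ ≤ M / κ) :
    bLow δ κ k₁ k₂ θ₂ θ ∈ IL δ κ μ M :=
  ⟨(mul_le_mul_of_nonneg_left hμ hc).trans (mul_le_bLow hc hk₂1 hθ),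
    (bLow_le_mul hc hk₁ hk₂ hk₂1.le hθ).trans (mul_le_mul_of_nonneg_left hθ₂ hc)⟩

end Barrier

theorem curvature_poly_le {u t c : ℝ} (hu : 0 < u) (hu1 : u < 1) (ht : 0 ≤ t)
    (ht1 : t ≤ 37 / 100) (hc : c ≤ 1) :
    (1 - u) * (c * (1 - u + t) ^ 2 / 2 + t - 2 * u) ≤ (1 + u) * (1 - u + t) := by
  have hs : 0 < 1 - u + t := by linarith
  nlinarith [mul_nonneg (sub_nonneg.2 hu1.le) (sub_nonneg.2 hc), mul_pos hu hs,
    mul_pos (mul_pos hu hs) hs, mul_nonneg ht (sub_nonneg.2 ht1),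
    mul_nonneg (mul_nonneg (sub_nonneg.2 hu1.le) hs.le) hs.le, mul_nonneg ht hs.le,
    mul_nonneg (mul_nonneg ht hs.le) hs.le, mul_pos (mul_pos hu hu) hs, sq_nonneg u]

theorem capped_curvature_poly_le {δ k₂ u t : ℝ} (hδ : 0 < δ) (hδ1 : δ < 1) (hk₂ : 0 < k₂)
    (hk₂1 : k₂ < 1) (hu : 0 ≤ u) (hu1 : u ≤ 1 - k₂) (ht : 0 ≤ t)
    (ht1 : t ≤ 37 / 100 * (1 - k₂)) :
    k₂ * (2 - δ * k₂) * (614 / 1000 * δ * (1 - u + t) ^ 2 + 2 * u - t)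
      ≤ (2 - k₂) * (1 - u + t) * (2 - δ * (1 - u + t)) := by
  -- the gap is a concave quadratic in `s = 1 - u + t`: nonnegative at `s = k₂ + t`
  -- and nondecreasing on `[k₂ + t, 1 + t]`
  have hend : k₂ * (2 - δ * k₂) * (614 / 1000 * δ * (k₂ + t) ^ 2 + 2 * (1 - k₂) - t)
      ≤ (2 - k₂) * (k₂ + t) * (2 - δ * (k₂ + t)) := by
    nlinarith [mul_nonneg ht (sub_nonneg.2 ht1), sq_nonneg (k₂+t), mul_pos hk₂ hδ,
      mul_nonneg (mul_nonneg ht hk₂.le) (sub_nonneg.2 hk₂1.le),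
      mul_nonneg (mul_nonneg ht hδ.le) (sub_nonneg.2 hk₂1.le),
      mul_nonneg (mul_nonneg hk₂.le hk₂.le) (sub_nonneg.2 hδ1.le),
      mul_nonneg (mul_nonneg hk₂.le hk₂.le) (mul_nonneg hδ.le (sub_nonneg.2 hk₂1.le)),
      mul_nonneg ht (mul_nonneg hδ.le hk₂.le), sq_nonneg t, sq_nonneg (1-k₂),
      mul_nonneg (mul_nonneg hδ.le hk₂.le) ht,
      mul_nonneg (sub_nonneg.2 hδ1.le) (sub_nonneg.2 hk₂1.le),
      mul_nonneg (mul_nonneg (sub_nonneg.2 hδ1.le) hk₂.le) hk₂.le,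
      mul_nonneg (mul_nonneg (mul_nonneg hδ.le hk₂.le) hδ.le) hk₂.le]
  have hslope : 0 ≤ 2 * ((2 - k₂) + k₂ * (2 - δ * k₂))
      - δ * ((2 - k₂) + 614 / 1000 * k₂ * (2 - δ * k₂)) * ((1 - u + t) + (k₂ + t)) := by
    nlinarith [mul_pos hk₂ hδ, mul_nonneg (mul_nonneg hδ.le hk₂.le) (sub_nonneg.2 hk₂1.le),
      mul_nonneg (sub_nonneg.2 hδ1.le) hk₂.le,
      mul_nonneg (mul_nonneg hδ.le hk₂.le) (mul_nonneg hδ.le hk₂.le)]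
  nlinarith [mul_nonneg (by linarith : (0:ℝ) ≤ 1 - k₂ - u) hslope]

theorem one_sub_mul_curvature_le {k₁ u t c f f' b' b'' : ℝ} (hk₁ : 0 ≤ k₁) (hu : 0 < u)
    (hu1 : u < 1) (ht : 0 ≤ t) (ht1 : t ≤ 37 / 100) (hc : 0 ≤ c) (hc1 : c ≤ 1) (hf : 0 ≤ f)
    (hf' : f' ≤ k₁ / 2 * f) (hb' : b' = c * (1 - u + t)) (hb'' : b'' = c * k₁ * (t - 2 * u)) :
    (1 - u) * (f' * b' ^ 2 + f * b'') ≤ k₁ * (1 + u) * (f * b') := by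
  subst hb' hb''
  have hpoly := mul_le_mul_of_nonneg_left (curvature_poly_le hu hu1 ht ht1 hc1)
    (mul_nonneg (mul_nonneg hk₁ hf) hc)
  have hslope := mul_le_mul_of_nonneg_right hf'
    (mul_nonneg (sub_nonneg.2 hu1.le) (sq_nonneg (c * (1 - u + t))))
  linear_combination hpoly + hslope

theorem mul_curvature_le_of_neg {δ κ k₁ k₂ θ u t f f' W b' b'' : ℝ} (hδ : 0 < δ) (hδ1 : δ < 1)
    (hκ : 1 < κ) (hκ2 : κ < 2) (hk₁ : 0 ≤ k₁) (hk₂ : 0 < k₂) (hk₂1 : k₂ < 1) (hu : 0 ≤ u)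
    (hu1 : u ≤ 1 - k₂) (ht : 0 ≤ t) (ht1 : t ≤ 37 / 100 * (1 - k₂)) (hf : 0 ≤ f)
    (hf' : -(614 / 1000 * k₁ * f) ≤ f') (hcap : (1 - δ) * k₁ * θ * (2 - k₂) ≤ k₂ * (2 - δ * k₂))
    (hW : -((κ - 1) * (1 - δ) * θ) ≤ W) (hW0 : W < 0)
    (hb' : b' = δ * (κ - 1) * (1 - u + t)) (hb'' : b'' = δ * (κ - 1) * k₁ * (t - 2 * u)) :
    W * (f' * b' ^ 2 + f * b'') ≤ f * b' * (2 * (κ - 1) - b') := by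
  set s := 1 - u + t
  set c := δ * (κ - 1) with hc
  have hs0 : 0 ≤ s := by linarith
  have hc0 : 0 ≤ c := by positivity
  have hcδ : c ≤ δ := mul_le_of_le_one_right hδ.le (by linarith)
  subst hb' hb''
  set G := f' * (c * s) ^ 2 + f * (c * k₁ * (t - 2 * u))
  rcases le_or_gt 0 G with hG0 | hG0
  · have hb' : c * s ≤ 2 * (κ - 1) := by nlinarith
    nlinarith [mul_nonneg (mul_nonneg hf (mul_nonneg hc0 hs0)) (sub_nonneg.2 hb')]
  set Z := 614 / 1000 * δ * s ^ 2 + 2 * u - t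
  have hGZ : -G ≤ k₁ * f * c * Z := by
    have h1 := mul_le_mul_of_nonneg_right hf' (sq_nonneg (c * s))
    have h2 := mul_le_mul_of_nonneg_left hcδ
      (mul_nonneg (mul_nonneg (mul_nonneg hk₁ hf) hc0) (sq_nonneg s))
    linear_combination h1 + 614 / 1000 * h2
  have hZ0 : 0 < Z := pos_of_mul_pos_right (by linarith) (by positivity : 0 ≤ k₁ * f * c)
  have hcapZ : (1 - δ) * k₁ * θ * Z ≤ s * (2 - δ * s) := by
    refine le_of_mul_le_mul_left ?_ (by linarith : 0 < 2 - k₂)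
    linear_combination mul_le_mul_of_nonneg_right hcap hZ0.le
      + capped_curvature_poly_le hδ hδ1 hk₂ hk₂1 hu hu1 ht ht1
  calc W * G = (-W) * (-G) := by ring
    _ ≤ ((κ - 1) * (1 - δ) * θ) * (k₁ * f * c * Z) :=
        mul_le_mul (by linarith) hGZ (by linarith) (by nlinarith)
    _ = (κ - 1) * f * c * ((1 - δ) * k₁ * θ * Z) := by ring
    _ ≤ (κ - 1) * f * c * (s * (2 - δ * s)) :=
        mul_le_mul_of_nonneg_left hcapZ (mul_nonneg (mul_nonneg (by linarith) hf) hc0)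
    _ = f * (c * s) * (2 * (κ - 1) - c * s) := by linear_combination f * c * s ^ 2 * hc

theorem secondDeriv_neg_of_stationary {κ k₁ u P Q W f b' G : ℝ} (hk₁ : 0 < k₁) (hu : 0 < u)
    (hu1 : u < 1) (hP : 0 < P) (hQ : 0 < Q) (hfb : 0 < f * b') (hb' : b' < 2 * (κ - 1))
    (hstat : -(k₁ * u) * P + (1 - u) * (Q + f * b' * W) = 0)
    (hpos : 0 ≤ W → (1 - u) * G ≤ k₁ * (1 + u) * (f * b'))
    (hneg : W < 0 → W * G ≤ f * b' * (2 * (κ - 1) - b')) :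
    -(k₁ ^ 2 * u) * P + 2 * (-(k₁ * u) * (Q + f * b' * W))
      + (1 - u) * (f * b' * (b' - 2 * (κ - 1)) + W * G) < 0 := by
  have hv : 0 < 1 - u := sub_pos.2 hu1
  have hconcave : (1 - u) ^ 2 * (f * b' * (b' - 2 * (κ - 1))) < 0 :=
    mul_neg_of_pos_of_neg (by positivity) (mul_neg_of_pos_of_neg hfb (by linarith))
  refine neg_of_mul_neg_right ?_ hv.le
  have hid : (1 - u) * (-(k₁ ^ 2 * u) * P + 2 * (-(k₁ * u) * (Q + f * b' * W))
      + (1 - u) * (f * b' * (b' - 2 * (κ - 1)) + W * G))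
      = -(k₁ ^ 2 * u * (1 + u) * P) + (1 - u) ^ 2 * (f * b' * (b' - 2 * (κ - 1)))
        + (1 - u) ^ 2 * (W * G) := by
    linear_combination (-2 * k₁ * u) * hstat
  rw [hid]
  have hPterm : 0 < k₁ ^ 2 * u * (1 + u) * P := by positivity
  rcases le_or_gt 0 W with hW | hW
  · have h := mul_le_mul_of_nonneg_left (hpos hW) (mul_nonneg hv.le hW)
    have hQterm : 0 < k₁ * (1 + u) * ((1 - u) * Q) := by positivity
    linear_combination h + hconcave + hQterm + k₁ * (1 + u) * hstat
  · have h := mul_le_mul_of_nonneg_left (hneg hW) (sq_nonneg (1 - u))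
    linear_combination h + hPterm

theorem mul_le_of_le_A1 {δ κ k₁ k₂ M θ : ℝ} (hδ : δ ≤ 1) (hk₁ : 0 ≤ k₁) (hk₂ : k₂ < 2)
    (hθ : θ ≤ M / κ) (hA : (1 - δ) * k₁ * M / κ ≤ A1 δ k₂) :
    (1 - δ) * k₁ * θ * (2 - k₂) ≤ k₂ * (2 - δ * k₂) := by
  rw [A1, le_div_iff₀ (by linarith)] at hA
  have h := mul_le_mul_of_nonneg_right
    (mul_le_mul_of_nonneg_left hθ (mul_nonneg (sub_nonneg.2 hδ) hk₁)) (by linarith : 0 ≤ 2 - k₂)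
  rw [← mul_div_assoc] at h
  exact h.trans hA

theorem neg_mul_le_of_le_div {k f f' : ℝ} (hk : 0 ≤ k) (hf : 0 < f)
    (h : -(Real.exp 1 * k) / (2 * Real.exp 1 - 1) ≤ f' / f) : -(614 / 1000 * k * f) ≤ f' := by
  have he : Real.exp 1 / (2 * Real.exp 1 - 1) ≤ 614 / 1000 := by
    rw [div_le_iff₀ (by linarith [Real.exp_one_gt_d9])]
    linarith [Real.exp_one_gt_d9]
  have h' := (le_div_iff₀ hf).1 h
  have hrw : -(Real.exp 1 * k) / (2 * Real.exp 1 - 1) * f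
      = -(Real.exp 1 / (2 * Real.exp 1 - 1) * k * f) := by ring
  linarith [mul_le_mul_of_nonneg_right (mul_le_mul_of_nonneg_right he hk) hf.le]

section JLow

variable {p₀ δ κ k₁ k₂ θ₂ θ : ℝ} {fL fL' : ℝ → ℝ}

theorem eventually_hasDerivAt_premiumMargin_bLow (hf : IntegrableOn fL (Ioi 0))
    (hm : IntegrableOn (fun ℓ => ℓ * fL ℓ) (Ioi 0)) (hfd : ∀ ℓ, 0 < ℓ → HasDerivAt fL (fL' ℓ) ℓ)
    (hb : 0 < bLow δ κ k₁ k₂ θ₂ θ) :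
    ∀ᶠ y in 𝓝 θ, HasDerivAt (fun y => premiumMargin p₀ fL κ (bLow δ κ k₁ k₂ θ₂ y) y)
      (premiumFactor p₀ fL κ (bLow δ κ k₁ k₂ θ₂ y)
        + fL (bLow δ κ k₁ k₂ θ₂ y) * bLowDeriv δ κ k₁ k₂ θ₂ y * (bLow δ κ k₁ k₂ θ₂ y - (κ - 1) * y))
      y := by
  filter_upwards [hasDerivAt_bLow.continuousAt.eventually (lt_mem_nhds hb)] with y hy
  exact hasDerivAt_premiumMargin hf hm hasDerivAt_bLow hy (hfd _ hy).continuousAt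

theorem deriv_JLow_eq (hf : IntegrableOn fL (Ioi 0))
    (hm : IntegrableOn (fun ℓ => ℓ * fL ℓ) (Ioi 0)) (hfd : ∀ ℓ, 0 < ℓ → HasDerivAt fL (fL' ℓ) ℓ)
    (hb : 0 < bLow δ κ k₁ k₂ θ₂ θ) :
    deriv (JLow p₀ fL δ κ k₁ k₂ θ₂) θ
      = -(k₁ * (1 - etaLow k₁ k₂ θ₂ θ)) * premiumMargin p₀ fL κ (bLow δ κ k₁ k₂ θ₂ θ) θ
        + etaLow k₁ k₂ θ₂ θ * (premiumFactor p₀ fL κ (bLow δ κ k₁ k₂ θ₂ θ)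
          + fL (bLow δ κ k₁ k₂ θ₂ θ) * bLowDeriv δ κ k₁ k₂ θ₂ θ
            * (bLow δ κ k₁ k₂ θ₂ θ - (κ - 1) * θ)) :=
  (hasDerivAt_etaLow.fun_mul
    (eventually_hasDerivAt_premiumMargin_bLow (p₀ := p₀) hf hm hfd hb).self_of_nhds).deriv

theorem deriv_deriv_JLow_eq (hf : IntegrableOn fL (Ioi 0))
    (hm : IntegrableOn (fun ℓ => ℓ * fL ℓ) (Ioi 0)) (hfd : ∀ ℓ, 0 < ℓ → HasDerivAt fL (fL' ℓ) ℓ)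
    (hb : 0 < bLow δ κ k₁ k₂ θ₂ θ) :
    deriv (deriv (JLow p₀ fL δ κ k₁ k₂ θ₂)) θ
      = -(k₁ ^ 2 * (1 - etaLow k₁ k₂ θ₂ θ)) * premiumMargin p₀ fL κ (bLow δ κ k₁ k₂ θ₂ θ) θ
        + 2 * (-(k₁ * (1 - etaLow k₁ k₂ θ₂ θ)) * (premiumFactor p₀ fL κ (bLow δ κ k₁ k₂ θ₂ θ)
          + fL (bLow δ κ k₁ k₂ θ₂ θ) * bLowDeriv δ κ k₁ k₂ θ₂ θ
            * (bLow δ κ k₁ k₂ θ₂ θ - (κ - 1) * θ)))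
        + etaLow k₁ k₂ θ₂ θ * (fL (bLow δ κ k₁ k₂ θ₂ θ) * bLowDeriv δ κ k₁ k₂ θ₂ θ
            * (bLowDeriv δ κ k₁ k₂ θ₂ θ - 2 * (κ - 1))
          + (bLow δ κ k₁ k₂ θ₂ θ - (κ - 1) * θ)
            * (fL' (bLow δ κ k₁ k₂ θ₂ θ) * bLowDeriv δ κ k₁ k₂ θ₂ θ ^ 2 + fL (bLow δ κ k₁ k₂ θ₂ θ)
              * (δ * (κ - 1) * k₁ * (1 - etaLow k₁ k₂ θ₂ θ) * (k₁ * (θ₂ - θ) - 2)))) :=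
  deriv_deriv_mul_eq (.of_forall fun _ => hasDerivAt_etaLow)
    (eventually_hasDerivAt_premiumMargin_bLow hf hm hfd hb) hasDerivAt_etaLow_deriv
    (hasDerivAt_premiumMargin_deriv hf hasDerivAt_bLow hasDerivAt_bLowDeriv hb (hfd _ hb))

theorem deriv_deriv_JLow_neg (hδ : 0 < δ) (hδ1 : δ < 1) (hκ : 1 < κ) (hκ2 : κ < 2) (hk₁ : 0 < k₁)
    (hk₂ : 0 < k₂) (hk₂1 : k₂ < 1) (hθ₀ : 0 < θ) (hθ : θ ≤ θ₂) (hf : IntegrableOn fL (Ioi 0))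
    (hm : IntegrableOn (fun ℓ => ℓ * fL ℓ) (Ioi 0)) (hfd : ∀ ℓ, 0 < ℓ → HasDerivAt fL (fL' ℓ) ℓ)
    (hfb : 0 < fL (bLow δ κ k₁ k₂ θ₂ θ))
    (hslope : -(614 / 1000 * k₁ * fL (bLow δ κ k₁ k₂ θ₂ θ)) ≤ fL' (bLow δ κ k₁ k₂ θ₂ θ))
    (hslope' : fL' (bLow δ κ k₁ k₂ θ₂ θ) ≤ k₁ / 2 * fL (bLow δ κ k₁ k₂ θ₂ θ))
    (hcdf : lossCdf p₀ fL (bLow δ κ k₁ k₂ θ₂ θ) ≤ 1)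
    (htail : ∫ ℓ in Ioi (bLow δ κ k₁ k₂ θ₂ θ), ℓ * fL ℓ < θ)
    (hcap : (1 - δ) * k₁ * θ * (2 - k₂) ≤ k₂ * (2 - δ * k₂))
    (hstat : deriv (JLow p₀ fL δ κ k₁ k₂ θ₂) θ = 0) :
    deriv (deriv (JLow p₀ fL δ κ k₁ k₂ θ₂)) θ < 0 := by
  have hc : 0 < δ * (κ - 1) := mul_pos hδ (sub_pos.2 hκ)
  have hbθ := mul_le_bLow (k₁ := k₁) (k₂ := k₂) hc.le hk₂1 hθ
  have hb : 0 < bLow δ κ k₁ k₂ θ₂ θ := (mul_pos hc hθ₀).trans_le hbθ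
  rw [deriv_JLow_eq hf hm hfd hb] at hstat
  rw [deriv_deriv_JLow_eq hf hm hfd hb]
  have hu := one_sub_etaLow_pos (k₁ := k₁) (θ₂ := θ₂) (θ := θ) hk₂1
  have hu1 := one_sub_etaLow_le hk₁.le hk₂1.le hθ
  have ht := mul_one_sub_etaLow_le (k₁ := k₁) (θ₂ := θ₂) (θ := θ) hk₂1.le
  have hb' : bLowDeriv δ κ k₁ k₂ θ₂ θ
      = δ * (κ - 1) * (1 - (1 - etaLow k₁ k₂ θ₂ θ) + k₁ * (1 - etaLow k₁ k₂ θ₂ θ) * (θ₂ - θ)) := by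
    rw [bLowDeriv]; ring
  have hQ : 1 ≤ premiumFactor p₀ fL κ (bLow δ κ k₁ k₂ θ₂ θ) := by rw [premiumFactor]; nlinarith
  have hP : 0 < premiumMargin p₀ fL κ (bLow δ κ k₁ k₂ θ₂ θ) θ := by rw [premiumMargin]; nlinarith
  generalize etaLow k₁ k₂ θ₂ θ = η at *
  generalize bLow δ κ k₁ k₂ θ₂ θ = b at *
  generalize premiumFactor p₀ fL κ b = Q at *
  generalize premiumMargin p₀ fL κ b θ = P at *
  generalize bLowDeriv δ κ k₁ k₂ θ₂ θ = b' at *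
  subst hb'
  have ht0 : 0 ≤ k₁ * (1 - η) * (θ₂ - θ) := by have := sub_nonneg.2 hθ; positivity
  have hb'lt : δ * (κ - 1) * (1 - (1 - η) + k₁ * (1 - η) * (θ₂ - θ)) < 2 * (κ - 1) := by
    nlinarith [mul_lt_mul_of_pos_left (by linarith : 1 - (1 - η) + k₁ * (1 - η) * (θ₂ - θ) < 2) hc]
  refine lt_of_eq_of_lt (by ring) (secondDeriv_neg_of_stationary (Q := Q) (W := b - (κ - 1) * θ)
    (G := fL' b * (δ * (κ - 1) * (1 - (1 - η) + k₁ * (1 - η) * (θ₂ - θ))) ^ 2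
      + fL b * (δ * (κ - 1) * k₁ * (1 - η) * (k₁ * (θ₂ - θ) - 2)))
    hk₁ hu (by linarith) hP (by linarith) (mul_pos hfb (mul_pos hc (by linarith))) hb'lt
    (by linear_combination hstat)
    (fun _ => one_sub_mul_curvature_le hk₁.le hu (by linarith) ht0 (by linarith) hc.le
      (by nlinarith) hfb.le hslope' rfl (by ring))
    (fun hW => mul_curvature_le_of_neg hδ hδ1 hκ hκ2 hk₁.le hk₂ hk₂1 hu.le hu1 ht0 ht hfb.le
      hslope hcap (by linarith) hW rfl (by ring)))

end JLow

theorem stmt_10_general (p₀ δ κ M k₁ k₂ μ : ℝ) (fL fL' : ℝ → ℝ) (θ₂ : ℝ)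
    (hδ : δ ∈ Set.Ioo (0:ℝ) 1)
    (hκ : κ ∈ Set.Ioo (1:ℝ) 2)
    (hk₁ : k₁ ∈ Set.Ioo (0:ℝ) 1) (hk₂ : k₂ ∈ Set.Ioo (0:ℝ) 1)
    (hfpos : ∀ ℓ : ℝ, 0 < ℓ → 0 < fL ℓ)
    (hfd : ∀ ℓ : ℝ, 0 < ℓ → HasDerivAt fL (fL' ℓ) ℓ)
    (hfint : IntegrableOn fL (Set.Ioi 0))
    (hftot : ∫ ℓ in Set.Ioi (0:ℝ), fL ℓ = 1 - p₀)
    (hmint : IntegrableOn (fun ℓ => ℓ * fL ℓ) (Set.Ioi 0))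
    (hμ : μ = ∫ ℓ in Set.Ioi (0:ℝ), ℓ * fL ℓ) (hμpos : 0 < μ)
    (hθ₂ : θ₂ ∈ Theta μ M κ)
    (hcond1 : ∀ ℓ ∈ IL δ κ μ M,
      -(Real.exp 1 * k₁) / (2 * Real.exp 1 - 1) ≤ fL' ℓ / fL ℓ ∧
        fL' ℓ / fL ℓ ≤ k₁ / 2)
    (hcond2 : (1 - δ) * k₁ * M / κ ≤ A1 δ k₂) :
    ∀ θ₁ ∈ Set.Icc μ θ₂,
      deriv (JLow p₀ fL δ κ k₁ k₂ θ₂) θ₁ = 0 →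
      deriv (deriv (JLow p₀ fL δ κ k₁ k₂ θ₂)) θ₁ < 0 := by
  obtain ⟨hδ0, hδ1⟩ := hδ
  obtain ⟨hκ1, hκ2⟩ := hκ
  obtain ⟨hk₁0, -⟩ := hk₁
  obtain ⟨hk₂0, hk₂1⟩ := hk₂
  rintro θ₁ ⟨hμθ₁, hθ₁θ₂⟩ hstat
  have hc : 0 < δ * (κ - 1) := mul_pos hδ0 (sub_pos.2 hκ1)
  have hbIL := bLow_mem_IL (k₁ := k₁) (k₂ := k₂) hc.le hk₁0.le hk₂0.le hk₂1 hμθ₁ hθ₁θ₂ hθ₂.2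
  have hb : 0 < bLow δ κ k₁ k₂ θ₂ θ₁ := (mul_pos hc hμpos).trans_le hbIL.1
  have hfb := hfpos _ hb
  obtain ⟨hlo, hhi⟩ := hcond1 _ hbIL
  have htail : ∫ ℓ in Ioi (bLow δ κ k₁ k₂ θ₂ θ₁), ℓ * fL ℓ < θ₁ :=
    (integral_Ioi_lt_integral_Ioi hmint hb fun x hx => mul_pos hx.1 (hfpos x hx.1)).trans_le
      (hμ ▸ hμθ₁)
  exact deriv_deriv_JLow_neg hδ0 hδ1 hκ1 hκ2 hk₁0 hk₂0 hk₂1 (hμpos.trans_le hμθ₁) hθ₁θ₂ hfint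
    hmint hfd hfb (neg_mul_le_of_le_div hk₁0.le hfb hlo)
    (by rw [div_le_iff₀ hfb] at hhi; linarith)
    (lossCdf_le_one hfint hftot hb.le fun ℓ hℓ => (hfpos ℓ (hb.trans hℓ)).le) htail
    (mul_le_of_le_A1 hδ1.le hk₁0.le (by linarith) (hθ₁θ₂.trans hθ₂.2) hcond2) hstat

/-- Lemma A.1: on `[μ, θ₂]`, every stationary point of the smooth branch
`J̃¹` of Company 1's profit is a strict local maximum. -/
theorem stmt_10 (p₀ δ κ M k₁ k₂ μ : ℝ) (fL fL' fL'' : ℝ → ℝ) (θ₂ : ℝ)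
    (hp₀ : p₀ ∈ Set.Ioo (0:ℝ) 1) (hδ : δ ∈ Set.Ioo (0:ℝ) 1)
    (hκ : κ ∈ Set.Ioo (1:ℝ) 2)
    (hk₁ : k₁ ∈ Set.Ioo (0:ℝ) 1) (hk₂ : k₂ ∈ Set.Ioo (0:ℝ) 1)
    (hfpos : ∀ ℓ : ℝ, 0 < ℓ → 0 < fL ℓ)
    (hfd : ∀ ℓ : ℝ, 0 < ℓ → HasDerivAt fL (fL' ℓ) ℓ)
    (hfd2 : ∀ ℓ : ℝ, 0 < ℓ → HasDerivAt fL' (fL'' ℓ) ℓ)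
    (hfd2_cont : ContinuousOn fL'' (Set.Ioi 0))
    (hfint : IntegrableOn fL (Set.Ioi 0))
    (hftot : ∫ ℓ in Set.Ioi (0:ℝ), fL ℓ = 1 - p₀)
    (hmint : IntegrableOn (fun ℓ => ℓ * fL ℓ) (Set.Ioi 0))
    (hμ : μ = ∫ ℓ in Set.Ioi (0:ℝ), ℓ * fL ℓ) (hμpos : 0 < μ) (hM : κ * μ ≤ M)
    (hθ₂ : θ₂ ∈ Theta μ M κ)
    (hcond1 : ∀ ℓ ∈ IL δ κ μ M,
      -(Real.exp 1 * k₁) / (2 * Real.exp 1 - 1) ≤ fL' ℓ / fL ℓ ∧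
        fL' ℓ / fL ℓ ≤ k₁ / 2)
    (hcond2 : (1 - δ) * k₁ * M / κ ≤ A1 δ k₂) :
    ∀ θ₁ ∈ Set.Icc μ θ₂,
      deriv (JLow p₀ fL δ κ k₁ k₂ θ₂) θ₁ = 0 →
      deriv (deriv (JLow p₀ fL δ κ k₁ k₂ θ₂)) θ₁ < 0 :=
  stmt_10_general p₀ δ κ M k₁ k₂ μ fL fL' θ₂ hδ hκ hk₁ hk₂ hfpos hfd hfint hftot hmint hμ hμpos hθ₂
    hcond1 hcond2

end
end

section
/- For all δ ∈ (0,1], k₂ ∈ (0,1], and all real B with k₂ ≤ B ≤ 1 + (1−k₂)/e², one has δ·B + k₂(2 − δk₂)/B ≤ 2. -/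
/-- for `δ ∈ (0,1]`, `k₂ ∈ (0,1]` and `k₂ ≤ B ≤ 1 + (1−k₂)/e²`,
one has `δB + k₂(2−δk₂)/B ≤ 2`. -/
theorem stmt_14 (δ k₂ B : ℝ)
    (hδ : δ ∈ Set.Ioc (0:ℝ) 1) (hk₂ : k₂ ∈ Set.Ioc (0:ℝ) 1)
    (hB₁ : k₂ ≤ B) (hB₂ : B ≤ 1 + (1 - k₂) / Real.exp 1 ^ 2) :
    δ * B + k₂ * (2 - δ * k₂) / B ≤ 2 := by
  obtain ⟨hδ0, hδ1⟩ := hδ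
  obtain ⟨hk0, hk1⟩ := hk₂
  have hB0 : 0 < B := lt_of_lt_of_le hk0 hB₁
  have he : (1:ℝ) ≤ Real.exp 1 ^ 2 := by nlinarith [Real.one_le_exp (zero_le_one' ℝ)]
  have he0 : (0:ℝ) < Real.exp 1 ^ 2 := lt_of_lt_of_le one_pos he
  have hBle : B ≤ 2 - k₂ := by
    have : (1 - k₂) / Real.exp 1 ^ 2 ≤ 1 - k₂ := by
      apply div_le_self (by linarith) he
    linarith
  rw [add_div' _ _ _ (ne_of_gt hB0), div_le_iff₀ hB0]
  nlinarith [mul_nonneg (sub_nonneg.2 hB₁) (sub_nonneg.2 hδ1), sq_nonneg (B - k₂)]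
end

section
/- For all δ ∈ (0,1), k₂ ∈ (0,1), κ > 1, and k₁ > 0, one has k₁ / ( 2δ(2−δ)·max(k₂, 1−k₂)·(κ−1)² ) ≤ min(m₁, m₂), where A₁ := k₂(2−δk₂)/(2−k₂), A₂ := (1−k₂)(2−δ(1−k₂))/(1+k₂), m₁ := k₁/(δ(κ−1)²k₂·max(2A₁, 2δ−A₁)), and m₂ := k₁/(δ(κ−1)²(1−k₂)·max(2A₂, 2δ−A₂)). Consequently, if a loss density f_L satisfies f_L(ℓ) ≤ 1 − p₀ for all ℓ > 0 and 1 − p₀ ≤ k₁/(2δ(2−δ)·max(k₂, 1−k₂)·(κ−1)²), then f_L(ℓ) ≤ min(m₁, m₂) for all ℓ > 0. -/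
noncomputable section

open MeasureTheory Set

lemma aux_key (δ u : ℝ) (hδ0 : 0 < δ) (hδ1 : δ < 1) (hu0 : 0 < u) (hu1 : u < 1) :
    0 < max (2 * (u * (2 - δ * u) / (2 - u))) (2 * δ - u * (2 - δ * u) / (2 - u)) ∧
    max (2 * (u * (2 - δ * u) / (2 - u))) (2 * δ - u * (2 - δ * u) / (2 - u)) ≤ 2 * (2 - δ) := by
  have h2u : 0 < 2 - u := by linarith
  have hA : 0 < u * (2 - δ * u) / (2 - u) := by
    apply div_pos _ h2u
    have h1 : δ * u < 1 := by nlinarith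
    nlinarith
  have hA2 : u * (2 - δ * u) / (2 - u) ≤ 2 - δ := by
    rw [div_le_iff₀ h2u]
    nlinarith [mul_nonneg (by linarith : (0:ℝ) ≤ 1 - u)
      (by nlinarith : (0:ℝ) ≤ 4 - δ * (2 + u))]
  constructor
  · exact lt_max_of_lt_left (by linarith)
  · apply max_le (by linarith) (by linarith)

/-- Remark on conditions: `k₁/(2δ(2−δ)(k₂ ∨ (1−k₂))(κ−1)²) ≤ min(m₁,m₂)`;
consequently, any loss density bounded by `1−p₀` with
`1−p₀ ≤ k₁/(2δ(2−δ)(k₂ ∨ (1−k₂))(κ−1)²)` is bounded by `min(m₁,m₂)`. -/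
theorem stmt_15 (δ κ k₁ k₂ : ℝ)
    (hδ : δ ∈ Set.Ioo (0:ℝ) 1) (hk₂ : k₂ ∈ Set.Ioo (0:ℝ) 1)
    (hκ : 1 < κ) (hk₁ : 0 < k₁) :
    k₁ / (2 * δ * (2 - δ) * max k₂ (1 - k₂) * (κ - 1) ^ 2)
      ≤ min (m1 δ κ k₁ k₂) (m2 δ κ k₁ k₂) ∧
    ∀ (p₀ : ℝ) (fL : ℝ → ℝ),
      (∀ ℓ : ℝ, 0 < ℓ → fL ℓ ≤ 1 - p₀) →
      1 - p₀ ≤ k₁ / (2 * δ * (2 - δ) * max k₂ (1 - k₂) * (κ - 1) ^ 2) →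
      ∀ ℓ : ℝ, 0 < ℓ → fL ℓ ≤ min (m1 δ κ k₁ k₂) (m2 δ κ k₁ k₂) := by
  obtain ⟨hδ0, hδ1⟩ := hδ
  obtain ⟨hk0, hk1⟩ := hk₂
  have hκ' : 0 < (κ - 1) ^ 2 := pow_pos (by linarith) 2
  obtain ⟨hm1p, hm1b⟩ := aux_key δ k₂ hδ0 hδ1 hk0 hk1
  obtain ⟨hm2p, hm2b⟩ := aux_key δ (1 - k₂) hδ0 hδ1 (by linarith) (by linarith)
  rw [show (2:ℝ) - (1 - k₂) = 1 + k₂ from by ring] at hm2p hm2b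
  have hmaxk : 0 < max k₂ (1 - k₂) := lt_max_of_lt_left hk0
  have key : k₁ / (2 * δ * (2 - δ) * max k₂ (1 - k₂) * (κ - 1) ^ 2)
      ≤ min (m1 δ κ k₁ k₂) (m2 δ κ k₁ k₂) := by
    refine le_min ?_ ?_
    · unfold m1 A1
      apply div_le_div_of_nonneg_left hk₁.le
      · exact mul_pos (mul_pos (mul_pos hδ0 hκ') hk0) hm1p
      · calc δ * (κ - 1) ^ 2 * k₂ * max (2 * (k₂ * (2 - δ * k₂) / (2 - k₂)))
              (2 * δ - k₂ * (2 - δ * k₂) / (2 - k₂))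
            ≤ δ * (κ - 1) ^ 2 * max k₂ (1 - k₂) * (2 * (2 - δ)) := by
              apply mul_le_mul _ hm1b hm1p.le (by positivity)
              apply mul_le_mul_of_nonneg_left (le_max_left _ _) (by positivity)
        _ = 2 * δ * (2 - δ) * max k₂ (1 - k₂) * (κ - 1) ^ 2 := by ring
    · unfold m2 A2
      apply div_le_div_of_nonneg_left hk₁.le
      · exact mul_pos (mul_pos (mul_pos hδ0 hκ') (by linarith)) hm2p
      · calc δ * (κ - 1) ^ 2 * (1 - k₂) * max (2 * ((1 - k₂) * (2 - δ * (1 - k₂)) / (1 + k₂)))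
              (2 * δ - (1 - k₂) * (2 - δ * (1 - k₂)) / (1 + k₂))
            ≤ δ * (κ - 1) ^ 2 * max k₂ (1 - k₂) * (2 * (2 - δ)) := by
              apply mul_le_mul _ hm2b hm2p.le (by positivity)
              apply mul_le_mul_of_nonneg_left (le_max_right _ _) (by positivity)
        _ = 2 * δ * (2 - δ) * max k₂ (1 - k₂) * (κ - 1) ^ 2 := by ring
  exact ⟨key, fun p₀ fL hb hb2 ℓ hℓ => le_trans (hb ℓ hℓ) (le_trans hb2 key)⟩

end
end

section
/- In the 2-class premium game, fix θ₂ ∈ Θ. Then for every θ₁ ∈ (μ, θ₂), the function θ ↦ J¹(θ; θ₂) is differentiable at θ₁ with derivative k₁(η̄ − 1)·( θ₁(a + κ(1−a)) − m ) + η̄·( (a + κ(1−a)) + (θ₁(1−κ) + b*)·q ), where η̄ := η(θ₂−θ₁) = 1 − (1−k₂)e^{−k₁(θ₂−θ₁)}, b* := δ(κ−1)(η̄θ₁ + (1−η̄)θ₂), a := F_L(b*), m := ∫_{b*}^∞ ℓ f_L(ℓ)dℓ, and q := f_L(b*)·δ(κ−1)·( η̄ + k₁(θ₂−θ₁)(1−η̄)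 ). -/
noncomputable section

open MeasureTheory Set

/-
On the region `θ₁ < θ₂` the choice probability `η(θ₂ − θ₁)` is given by its smooth exponential
branch, so `θ ↦ J¹(θ;θ₂)` is a product of smooth functions with the cdf `F_L` and the tail
expectation `u ↦ ∫_u^∞ ℓ f_L(ℓ) dℓ` composed with the barrier `b*`. Since `θ₁ > μ > 0` and
`η ≤ 1`, the barrier is at least `δ(κ−1)θ₁ > 0`, where `f_L` is continuous; the fundamental
theorem of calculus differentiates both integrals there, and the chain and product rules give
the formula.
-/

theorem expEta_of_nonneg (k₁ k₂ : ℝ) {t : ℝ} (ht : 0 ≤ t) :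
    expEta k₁ k₂ t = 1 - (1 - k₂) * Real.exp (-(k₁ * t)) :=
  if_pos ht

theorem expEta_le_one (k₁ : ℝ) {k₂ t : ℝ} (hk₂ : k₂ ≤ 1) (ht : 0 ≤ t) :
    expEta k₁ k₂ t ≤ 1 := by
  rw [expEta_of_nonneg k₁ k₂ ht]
  have : 0 ≤ (1 - k₂) * Real.exp (-(k₁ * t)) := mul_nonneg (by linarith) (Real.exp_pos _).le
  linarith

theorem hasDerivAt_expEta (k₁ k₂ : ℝ) {t : ℝ} (ht : 0 < t) :
    HasDerivAt (expEta k₁ k₂) (k₁ * (1 - expEta k₁ k₂ t)) t := by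
  have hsmooth : HasDerivAt (fun t => 1 - (1 - k₂) * Real.exp (-(k₁ * t)))
      (k₁ * (1 - expEta k₁ k₂ t)) t := by
    have := (((hasDerivAt_id' t).const_mul k₁).neg.exp.const_mul (1 - k₂)).const_sub 1
    exact this.congr_deriv (by rw [expEta_of_nonneg k₁ k₂ ht.le, Pi.neg_apply]; ring)
  refine hsmooth.congr_of_eventuallyEq ?_
  filter_upwards [Ioi_mem_nhds ht] with s hs using expEta_of_nonneg k₁ k₂ (le_of_lt hs)

theorem hasDerivAt_expEta_sub (k₁ k₂ : ℝ) {θ θ₂ : ℝ} (hθ : θ < θ₂) :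
    HasDerivAt (fun s => expEta k₁ k₂ (θ₂ - s)) (k₁ * (expEta k₁ k₂ (θ₂ - θ) - 1)) θ := by
  have := (hasDerivAt_expEta k₁ k₂ (sub_pos.2 hθ)).comp θ ((hasDerivAt_id' θ).const_sub θ₂)
  exact this.congr_deriv (by ring)

theorem hasDerivAt_repBarrier (δ κ k₁ k₂ : ℝ) {θ θ₂ : ℝ} (hθ : θ < θ₂) :
    HasDerivAt (fun s => repBarrier δ κ k₁ k₂ s θ₂)
      (δ * (κ - 1) * (expEta k₁ k₂ (θ₂ - θ)
        + k₁ * (θ₂ - θ) * (1 - expEta k₁ k₂ (θ₂ - θ)))) θ := by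
  have hη := hasDerivAt_expEta_sub k₁ k₂ hθ
  have := ((hη.mul (hasDerivAt_id' θ)).add ((hη.const_sub 1).mul_const θ₂)).const_mul (δ * (κ - 1))
  exact this.congr_deriv (by ring)

theorem mul_le_repBarrier (δ κ k₁ : ℝ) {k₂ θ₁ θ₂ : ℝ} (hδκ : 0 ≤ δ * (κ - 1)) (hk₂ : k₂ ≤ 1)
    (hθ : θ₁ ≤ θ₂) : δ * (κ - 1) * θ₁ ≤ repBarrier δ κ k₁ k₂ θ₁ θ₂ := by
  have hη := expEta_le_one k₁ hk₂ (sub_nonneg.2 hθ)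
  have : θ₁ ≤ expEta k₁ k₂ (θ₂ - θ₁) * θ₁ + (1 - expEta k₁ k₂ (θ₂ - θ₁)) * θ₂ := by
    nlinarith
  exact mul_le_mul_of_nonneg_left this hδκ

section Integrals

variable {f : ℝ → ℝ} {x : ℝ}

theorem hasDerivAt_intervalIntegral_zero_of_continuousOn_Ioi (hfc : ContinuousOn f (Ioi 0))
    (hfi : IntegrableOn f (Ioi 0)) (hx : 0 < x) :
    HasDerivAt (fun u => ∫ ℓ in (0 : ℝ)..u, f ℓ) (f x) x := by
  apply intervalIntegral.integral_hasDerivAt_right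
  · rw [intervalIntegrable_iff, uIoc_of_le hx.le]
    exact hfi.mono_set Ioc_subset_Ioi_self
  · exact ⟨Ioi 0, Ioi_mem_nhds hx, hfc.aestronglyMeasurable measurableSet_Ioi⟩
  · exact hfc.continuousAt (Ioi_mem_nhds hx)

theorem hasDerivAt_setIntegral_Ioi_of_continuousOn_Ioi (hfc : ContinuousOn f (Ioi 0))
    (hfi : IntegrableOn f (Ioi 0)) (hx : 0 < x) :
    HasDerivAt (fun u => ∫ ℓ in Ioi u, f ℓ) (-f x) x := by
  have heq : (fun u => ∫ ℓ in Ioi u, f ℓ) =ᶠ[nhds x]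
      fun u => (∫ ℓ in Ioi 0, f ℓ) - ∫ ℓ in (0 : ℝ)..u, f ℓ := by
    filter_upwards [Ioi_mem_nhds hx] with u hu
    rw [← intervalIntegral.integral_interval_add_Ioi hfi (hfi.mono_set (Ioi_subset_Ioi hu.le))]
    ring
  exact ((hasDerivAt_intervalIntegral_zero_of_continuousOn_Ioi hfc hfi hx).const_sub _)
    |>.congr_of_eventuallyEq heq

theorem hasDerivAt_lossCdf_s18 (p₀ : ℝ) (hfc : ContinuousOn f (Ioi 0))
    (hfi : IntegrableOn f (Ioi 0)) (hx : 0 < x) :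
    HasDerivAt (lossCdf p₀ f) (f x) x :=
  (hasDerivAt_intervalIntegral_zero_of_continuousOn_Ioi hfc hfi hx).const_add p₀

end Integrals

theorem stmt_18_general (p₀ δ κ k₁ k₂ μ : ℝ) (fL : ℝ → ℝ) (θ₂ : ℝ)
    (hδ : δ ∈ Set.Ioo (0:ℝ) 1)
    (hκ : κ ∈ Set.Ioo (1:ℝ) 2)
    (hk₂ : k₂ ∈ Set.Ioo (0:ℝ) 1)
    (hfc : ContinuousOn fL (Set.Ioi 0))
    (hfint : IntegrableOn fL (Set.Ioi 0))
    (hmint : IntegrableOn (fun ℓ => ℓ * fL ℓ) (Set.Ioi 0))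
    (hμpos : 0 < μ) :
    ∀ θ₁ ∈ Set.Ioo μ θ₂,
      HasDerivAt (fun θ : ℝ => J1 p₀ fL δ κ k₁ k₂ θ θ₂)
        (k₁ * (expEta k₁ k₂ (θ₂ - θ₁) - 1) *
            (θ₁ * (aProb p₀ fL δ κ k₁ k₂ θ₁ θ₂
                + κ * (1 - aProb p₀ fL δ κ k₁ k₂ θ₁ θ₂))
              - mRep fL δ κ k₁ k₂ θ₁ θ₂)
          + expEta k₁ k₂ (θ₂ - θ₁) *
            ((aProb p₀ fL δ κ k₁ k₂ θ₁ θ₂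
                + κ * (1 - aProb p₀ fL δ κ k₁ k₂ θ₁ θ₂))
              + (θ₁ * (1 - κ) + repBarrier δ κ k₁ k₂ θ₁ θ₂) *
                (fL (repBarrier δ κ k₁ k₂ θ₁ θ₂) * (δ * (κ - 1)) *
                  (expEta k₁ k₂ (θ₂ - θ₁)
                    + k₁ * (θ₂ - θ₁) * (1 - expEta k₁ k₂ (θ₂ - θ₁))))))
        θ₁ := by
  rintro θ₁ ⟨hμθ, hθ⟩
  have hδκ : 0 < δ * (κ - 1) := mul_pos hδ.1 (sub_pos.2 hκ.1)
  have hb : 0 < repBarrier δ κ k₁ k₂ θ₁ θ₂ :=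
    (mul_pos hδκ (hμpos.trans hμθ)).trans_le (mul_le_repBarrier δ κ k₁ hδκ.le hk₂.2.le hθ.le)
  have hη := hasDerivAt_expEta_sub k₁ k₂ hθ
  have hB := hasDerivAt_repBarrier δ κ k₁ k₂ hθ
  have ha := (hasDerivAt_lossCdf_s18 p₀ hfc hfint hb).comp θ₁ hB
  have hm := (hasDerivAt_setIntegral_Ioi_of_continuousOn_Ioi
    (continuousOn_id.mul hfc) hmint hb).comp θ₁ hB
  have hJ := hη.mul (((hasDerivAt_id' θ₁).mul (ha.add ((ha.const_sub 1).const_mul κ))).sub hm)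
  refine hJ.congr_deriv ?_
  simp only [aProb, mRep, Pi.mul_apply, Pi.add_apply, Pi.sub_apply, Function.comp_apply, id]
  ring

/-- derivative formula for Company 1's profit `θ ↦ J¹(θ;θ₂)`
at any `θ₁ ∈ (μ, θ₂)` (equation (A.2) of the paper). -/
theorem stmt_18 (p₀ δ κ M k₁ k₂ μ : ℝ) (fL : ℝ → ℝ) (θ₂ : ℝ)
    (hp₀ : p₀ ∈ Set.Ioo (0:ℝ) 1) (hδ : δ ∈ Set.Ioo (0:ℝ) 1)
    (hκ : κ ∈ Set.Ioo (1:ℝ) 2)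
    (hk₁ : k₁ ∈ Set.Ioo (0:ℝ) 1) (hk₂ : k₂ ∈ Set.Ioo (0:ℝ) 1)
    (hfc : ContinuousOn fL (Set.Ioi 0)) (hfpos : ∀ ℓ : ℝ, 0 < ℓ → 0 < fL ℓ)
    (hfint : IntegrableOn fL (Set.Ioi 0))
    (hftot : ∫ ℓ in Set.Ioi (0:ℝ), fL ℓ = 1 - p₀)
    (hmint : IntegrableOn (fun ℓ => ℓ * fL ℓ) (Set.Ioi 0))
    (hμ : μ = ∫ ℓ in Set.Ioi (0:ℝ), ℓ * fL ℓ) (hμpos : 0 < μ) (hM : κ * μ ≤ M)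
    (hθ₂ : θ₂ ∈ Theta μ M κ) :
    ∀ θ₁ ∈ Set.Ioo μ θ₂,
      HasDerivAt (fun θ : ℝ => J1 p₀ fL δ κ k₁ k₂ θ θ₂)
        (k₁ * (expEta k₁ k₂ (θ₂ - θ₁) - 1) *
            (θ₁ * (aProb p₀ fL δ κ k₁ k₂ θ₁ θ₂
                + κ * (1 - aProb p₀ fL δ κ k₁ k₂ θ₁ θ₂))
              - mRep fL δ κ k₁ k₂ θ₁ θ₂)
          + expEta k₁ k₂ (θ₂ - θ₁) *
            ((aProb p₀ fL δ κ k₁ k₂ θ₁ θ₂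
                + κ * (1 - aProb p₀ fL δ κ k₁ k₂ θ₁ θ₂))
              + (θ₁ * (1 - κ) + repBarrier δ κ k₁ k₂ θ₁ θ₂) *
                (fL (repBarrier δ κ k₁ k₂ θ₁ θ₂) * (δ * (κ - 1)) *
                  (expEta k₁ k₂ (θ₂ - θ₁)
                    + k₁ * (θ₂ - θ₁) * (1 - expEta k₁ k₂ (θ₂ - θ₁))))))
        θ₁ :=
  stmt_18_general p₀ δ κ k₁ k₂ μ fL θ₂ hδ hκ hk₂ hfc hfint hmint hμpos

end
end
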